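/- arXiv:2501.00503 — 6 statements merged into one kernel-verified Lean document; each statement's English description precedes it below -/
import Mathlib

section
/- For every submeasure φ on a set X and every subset A ⊆ X, there exists a measure μ on X with μ ≤ φ (pointwise on all subsets) and μ(A) = φ̂(A). In particular, if φ is nonpathological, then for every A ⊆ X there is a measure μ ≤ φ with μ(A) = φ(A). -/
open Filter
open scoped ENNReal

/-- A submeasure on a set (type) `X`. -/
def IsSubmeasure {X : Type*} (φ : Set X → ℝ≥0∞) : Prop :=
  φ ∅ = 0 ∧ (∀ A B : Set X, A ⊆ B → φ A ≤ φ B) ∧ ∀ A B : Set X, φ (A ∪ B) ≤ φ A + φ B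

/-- A (finitely additive) measure on `X`. -/
def IsFAMeasure {X : Type*} (μ : Set X → ℝ≥0∞) : Prop :=
  μ ∅ = 0 ∧ ∀ A B : Set X, Disjoint A B → μ (A ∪ B) = μ A + μ B

/-- `hat φ A = sup { μ A : μ a measure with μ ≤ φ pointwise }`. -/
noncomputable def hat {X : Type*} (φ : Set X → ℝ≥0∞) (A : Set X) : ℝ≥0∞ :=
  ⨆ (μ : Set X → ℝ≥0∞) (_ : IsFAMeasure μ ∧ ∀ B, μ B ≤ φ B), μ A

/-!
The finitely additive measures below `φ` form a closed, hence compact, subset of the compact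
product space `Set X → ℝ≥0∞`: both finite additivity and `μ ≤ φ` are conditions on finitely many
coordinates at a time. Evaluation at `A` is continuous, so it attains its supremum `hat φ A` on
this nonempty compact set.
-/

section

variable {X : Type*}

def faMeasuresLE (φ : Set X → ℝ≥0∞) : Set (Set X → ℝ≥0∞) :=
  {μ | IsFAMeasure μ ∧ ∀ B, μ B ≤ φ B}

theorem zero_mem_faMeasuresLE (φ : Set X → ℝ≥0∞) : (0 : Set X → ℝ≥0∞) ∈ faMeasuresLE φ :=
  ⟨⟨rfl, fun _ _ _ => (add_zero 0).symm⟩, fun _ => zero_le⟩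

theorem hat_eq_iSup_faMeasuresLE (φ : Set X → ℝ≥0∞) (A : Set X) :
    hat φ A = ⨆ μ ∈ faMeasuresLE φ, μ A :=
  rfl

theorem isClosed_setOf_isFAMeasure : IsClosed {μ : Set X → ℝ≥0∞ | IsFAMeasure μ} := by
  have empty : IsClosed {μ : Set X → ℝ≥0∞ | μ ∅ = 0} :=
    isClosed_eq (continuous_apply _) continuous_const
  have additive : IsClosed {μ : Set X → ℝ≥0∞ | ∀ A B : Set X, Disjoint A B →
      μ (A ∪ B) = μ A + μ B} := by
    simp only [Set.ofPred_forall]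
    exact isClosed_iInter fun A => isClosed_iInter fun B => isClosed_iInter fun _ =>
      isClosed_eq (continuous_apply _) ((continuous_apply A).add (continuous_apply B))
  exact empty.inter additive

theorem isCompact_faMeasuresLE (φ : Set X → ℝ≥0∞) : IsCompact (faMeasuresLE φ) :=
  (isClosed_setOf_isFAMeasure.inter isClosed_Iic).isCompact

theorem exists_faMeasure_apply_eq_hat (φ : Set X → ℝ≥0∞) (A : Set X) :
    ∃ μ ∈ faMeasuresLE φ, μ A = hat φ A := by
  obtain ⟨μ, hμ, hmax⟩ := (isCompact_faMeasuresLE φ).exists_sSup_image_eq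
    ⟨0, zero_mem_faMeasuresLE φ⟩ (continuous_apply A).continuousOn
  rw [sSup_image, ← hat_eq_iSup_faMeasuresLE] at hmax
  exact ⟨μ, hμ, hmax.symm⟩

end

theorem stmt0_general {X : Type*} (φ : Set X → ℝ≥0∞) :
    (∀ A : Set X, ∃ μ : Set X → ℝ≥0∞, IsFAMeasure μ ∧ (∀ B, μ B ≤ φ B) ∧ μ A = hat φ A) ∧
    ((∀ A, hat φ A = φ A) →
      ∀ A : Set X, ∃ μ : Set X → ℝ≥0∞, IsFAMeasure μ ∧ (∀ B, μ B ≤ φ B) ∧ μ A = φ A) := by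
  have attained : ∀ A : Set X, ∃ μ : Set X → ℝ≥0∞,
      IsFAMeasure μ ∧ (∀ B, μ B ≤ φ B) ∧ μ A = hat φ A := fun A => by
    obtain ⟨μ, ⟨hadd, hle⟩, hA⟩ := exists_faMeasure_apply_eq_hat φ A
    exact ⟨μ, hadd, hle, hA⟩
  refine ⟨attained, fun hnonpath A => ?_⟩
  obtain ⟨μ, hadd, hle, hA⟩ := attained A
  exact ⟨μ, hadd, hle, hA.trans (hnonpath A)⟩

/-- For every submeasure `φ` on `X` and every `A ⊆ X` there is a measure `μ ≤ φ` with
`μ A = hat φ A`; in particular, if `φ` is nonpathological, then for every `A` there is a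
measure `μ ≤ φ` with `μ A = φ A`. -/
theorem stmt0 {X : Type*} (φ : Set X → ℝ≥0∞) (hφ : IsSubmeasure φ) :
    (∀ A : Set X, ∃ μ : Set X → ℝ≥0∞, IsFAMeasure μ ∧ (∀ B, μ B ≤ φ B) ∧ μ A = hat φ A) ∧
    ((∀ A, hat φ A = φ A) →
      ∀ A : Set X, ∃ μ : Set X → ℝ≥0∞, IsFAMeasure μ ∧ (∀ B, μ B ≤ φ B) ∧ μ A = φ A) :=
  stmt0_general φ
end

section
/- For every submeasure φ on ω and every finite set F ⊆ ω, φ̂(F) = φ̂_σ(F). Moreover, if φ(ω ∖ F) = 0 for some finite set F ⊆ ω, then φ̂ = φ̂_σ (on all subsets of ω). -/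
open Filter
open scoped ENNReal

/-- A σ-measure on `X`: a measure that is countably additive on pairwise disjoint sequences. -/
def IsSigmaMeasure {X : Type*} (μ : Set X → ℝ≥0∞) : Prop :=
  IsFAMeasure μ ∧ ∀ A : ℕ → Set X, (Pairwise fun m n => Disjoint (A m) (A n)) →
    μ (⋃ n, A n) = ∑' n, μ (A n)

/-- `hatSigma φ A = sup { μ A : μ a σ-measure with μ ≤ φ pointwise }`. -/
noncomputable def hatSigma {X : Type*} (φ : Set X → ℝ≥0∞) (A : Set X) : ℝ≥0∞ :=
  ⨆ (μ : Set X → ℝ≥0∞) (_ : IsSigmaMeasure μ ∧ ∀ B, μ B ≤ φ B), μ A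

/-- Lower semicontinuity of a submeasure. -/
def IsLSC {X : Type*} (φ : Set X → ℝ≥0∞) : Prop :=
  ∀ A : Set X, φ A = ⨆ (F : Set X) (_ : F ⊆ A ∧ F.Finite), φ F

/-- The ratio used in the degree of pathology, with the conventions
`∞/∞ = 0/0 = 1`, `a/0 = ∞` and `∞/a = ∞` for positive real `a`. -/
noncomputable def pratio (a b : ℝ≥0∞) : ℝ≥0∞ :=
  if (a = 0 ∧ b = 0) ∨ (a = ⊤ ∧ b = ⊤) then 1 else a / b

/-- The degree of pathology. -/
noncomputable def degP {X : Type*} (φ : Set X → ℝ≥0∞) : ℝ≥0∞ :=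
  ⨆ A : Set X, pratio (φ A) (hat φ A)

/-- The σ-degree of pathology. -/
noncomputable def degPSigma {X : Type*} (φ : Set X → ℝ≥0∞) : ℝ≥0∞ :=
  ⨆ A : Set X, pratio (φ A) (hatSigma φ A)

/-- The Fin-degree of pathology. -/
noncomputable def degPFin {X : Type*} (φ : Set X → ℝ≥0∞) : ℝ≥0∞ :=
  ⨆ (A : Set X) (_ : A.Finite), pratio (φ A) (hat φ A)

/-! If `μ ≤ φ` is finitely additive and `F` is finite, then `B ↦ μ (B ∩ F)` is still below the
monotone `φ`, and it is countably additive because only finitely many members of a disjoint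
sequence meet `F`. This σ-measure agrees with `μ` on `F`, and on every `A` when `φ` vanishes
off `F`, since then `μ (A \ F) = 0`. -/

namespace IsFAMeasure

variable {X : Type*} {μ : Set X → ℝ≥0∞}

theorem measure_biUnion_finset (hμ : IsFAMeasure μ) {ι : Type*} (s : Finset ι) {A : ι → Set X}
    (hA : (s : Set ι).PairwiseDisjoint A) : μ (⋃ i ∈ s, A i) = ∑ i ∈ s, μ (A i) := by
  classical
  induction s using Finset.induction_on with
  | empty => simpa using hμ.1
  | @insert a s ha ih =>
    rw [Finset.coe_insert, Set.pairwiseDisjoint_insert_of_notMem (by simpa using ha)] at hA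
    have hdisj : Disjoint (A a) (⋃ i ∈ s, A i) :=
      Set.disjoint_iUnion₂_right.2 fun i hi => hA.2 i hi
    rw [Finset.set_biUnion_insert, hμ.2 _ _ hdisj, Finset.sum_insert ha, ih hA.1]

theorem restrict (hμ : IsFAMeasure μ) (F : Set X) : IsFAMeasure fun B => μ (B ∩ F) := by
  refine ⟨by simpa using hμ.1, fun A B hAB => ?_⟩
  simp only [Set.union_inter_distrib_right]
  exact hμ.2 _ _ (hAB.mono Set.inter_subset_left Set.inter_subset_left)

theorem measure_eq_measure_inter_add_diff (hμ : IsFAMeasure μ) (A F : Set X) :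
    μ A = μ (A ∩ F) + μ (A \ F) := by
  rw [← hμ.2 _ _ (Set.disjoint_sdiff_right.mono_left Set.inter_subset_right),
    Set.inter_union_sdiff]

end IsFAMeasure

theorem finite_setOf_inter_nonempty_of_pairwise_disjoint {X ι : Type*} {A : ι → Set X}
    (hA : Pairwise fun m n => Disjoint (A m) (A n)) {F : Set X} (hF : F.Finite) :
    {n | (A n ∩ F).Nonempty}.Finite := by
  have hsub : {n | (A n ∩ F).Nonempty} ⊆ ⋃ x ∈ F, {n | x ∈ A n} := by
    rintro n ⟨x, hxA, hxF⟩
    exact Set.mem_biUnion hxF hxA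
  refine (hF.biUnion fun x _ => Set.Subsingleton.finite ?_).subset hsub
  intro m hm n hn
  by_contra hmn
  exact Set.disjoint_left.1 (hA hmn) hm hn

theorem IsFAMeasure.isSigmaMeasure_restrict_of_finite {X : Type*} {μ : Set X → ℝ≥0∞}
    (hμ : IsFAMeasure μ) {F : Set X} (hF : F.Finite) :
    IsSigmaMeasure fun B => μ (B ∩ F) := by
  refine ⟨hμ.restrict F, fun A hA => ?_⟩
  set s := (finite_setOf_inter_nonempty_of_pairwise_disjoint hA hF).toFinset
  have hmem : ∀ n, n ∈ s ↔ (A n ∩ F).Nonempty := fun n => Set.Finite.mem_toFinset _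
  have hunion : (⋃ n, A n) ∩ F = ⋃ n ∈ s, A n ∩ F := by
    ext x
    simp only [Set.mem_inter_iff, Set.mem_iUnion, hmem, exists_prop]
    exact ⟨fun ⟨⟨n, hn⟩, hxF⟩ => ⟨n, ⟨x, hn, hxF⟩, hn, hxF⟩,
      fun ⟨n, _, hn, hxF⟩ => ⟨⟨n, hn⟩, hxF⟩⟩
  have hzero : ∀ n ∉ s, μ (A n ∩ F) = 0 := fun n hn => by
    rw [Set.not_nonempty_iff_eq_empty.1 fun h => hn ((hmem n).2 h), hμ.1]
  show μ ((⋃ n, A n) ∩ F) = ∑' n, μ (A n ∩ F)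
  rw [hunion, tsum_eq_sum hzero]
  exact hμ.measure_biUnion_finset s fun m _ n _ hmn =>
    (hA hmn).mono Set.inter_subset_left Set.inter_subset_left

section hat

variable {X : Type*} {φ : Set X → ℝ≥0∞}

theorem hatSigma_le_hat (A : Set X) : hatSigma φ A ≤ hat φ A :=
  iSup₂_le fun μ hμ => le_iSup₂ (f := fun μ (_ : IsFAMeasure μ ∧ ∀ B, μ B ≤ φ B) => μ A)
    μ ⟨hμ.1.1, hμ.2⟩

theorem measure_inter_finite_le_hatSigma (hφ : Monotone φ) {μ : Set X → ℝ≥0∞}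
    (hμ : IsFAMeasure μ) (hμφ : ∀ B, μ B ≤ φ B) {F : Set X} (hF : F.Finite) (A : Set X) :
    μ (A ∩ F) ≤ hatSigma φ A :=
  le_iSup₂ (f := fun ν (_ : IsSigmaMeasure ν ∧ ∀ B, ν B ≤ φ B) => ν A) (fun B => μ (B ∩ F))
    ⟨hμ.isSigmaMeasure_restrict_of_finite hF,
      fun _ => (hμφ _).trans (hφ Set.inter_subset_left)⟩

theorem hat_eq_hatSigma_of_finite (hφ : Monotone φ) {F : Set X} (hF : F.Finite) :
    hat φ F = hatSigma φ F := by
  refine le_antisymm (iSup₂_le fun μ hμ => ?_) (hatSigma_le_hat F)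
  simpa using measure_inter_finite_le_hatSigma hφ hμ.1 hμ.2 hF F

theorem hat_eq_hatSigma_of_compl_null (hφ : Monotone φ) {F : Set X} (hF : F.Finite)
    (hF0 : φ (Set.univ \ F) = 0) (A : Set X) : hat φ A = hatSigma φ A := by
  refine le_antisymm (iSup₂_le fun μ hμ => ?_) (hatSigma_le_hat A)
  have hnull : μ (A \ F) = 0 := nonpos_iff_eq_zero.1 <|
    calc μ (A \ F) ≤ φ (Set.univ \ F) := (hμ.2 _).trans (hφ (Set.sdiff_subset_sdiff_left le_top))
      _ = 0 := hF0
  rw [hμ.1.measure_eq_measure_inter_add_diff A F, hnull, add_zero]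
  exact measure_inter_finite_le_hatSigma hφ hμ.1 hμ.2 hF A

end hat

/-- For every submeasure `φ` on `ω`: `hat φ` and `hatSigma φ` agree on finite sets, and if
`φ (ω \ F) = 0` for some finite `F`, then `hat φ = hatSigma φ` everywhere. -/
theorem stmt2 (φ : Set ℕ → ℝ≥0∞) (hφ : IsSubmeasure φ) :
    (∀ F : Set ℕ, F.Finite → hat φ F = hatSigma φ F) ∧
    ((∃ F : Set ℕ, F.Finite ∧ φ (Set.univ \ F) = 0) → ∀ A : Set ℕ, hat φ A = hatSigma φ A) :=
  ⟨fun _ hF => hat_eq_hatSigma_of_finite hφ.2.1 hF,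
    fun ⟨_, hF, hF0⟩ => hat_eq_hatSigma_of_compl_null hφ.2.1 hF hF0⟩
end

section
/- Let I be an ideal on ω containing all finite subsets of ω, let δ be the submeasure with δ(∅) = 0 and δ(A) = 1 for A ≠ ∅, and let δ_I be the submeasure with δ_I(A) = 0 for A ∈ I and δ_I(A) = 1 otherwise. Then δ + δ_I is a submeasure which is not lower semicontinuous, and (δ + δ_I)̂_σ = δ while (δ + δ_I)̂ = δ + δ_I. -/
open Filter
open scoped ENNReal

/-- An ideal on `ℕ`. -/
def IsIdeal (I : Set (Set ℕ)) : Prop :=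
  ∅ ∈ I ∧ Set.univ ∉ I ∧ (∀ A B : Set ℕ, A ⊆ B → B ∈ I → A ∈ I) ∧
    ∀ A B : Set ℕ, A ∈ I → B ∈ I → A ∪ B ∈ I

open Classical in
/-- The submeasure `δ`: `δ(∅) = 0` and `δ(A) = 1` for nonempty `A`. -/
noncomputable def delta : Set ℕ → ℝ≥0∞ :=
  fun A => if A = ∅ then 0 else 1

open Classical in
/-- The submeasure `δ_I` associated to an ideal `I`. -/
noncomputable def deltaI (I : Set (Set ℕ)) : Set ℕ → ℝ≥0∞ :=
  fun A => if A ∈ I then 0 else 1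

/-!
A σ-measure on a countable set is continuous from below, so it is determined by its values on
finite sets; below `δ + δ_I` those values are bounded by `δ`, because `δ_I` vanishes on finite
sets. A Dirac measure then shows `(δ + δ_I)̂_σ = δ`, and comparing `δ + δ_I` on `ℕ ∉ I` with its
values on finite sets shows it is not lower semicontinuous. Finitely additive measures escape this
bound: for `A ∉ I`, the Dirac measure at a point of `A` plus the two-valued measure of an
ultrafilter containing `A` and disjoint from `I` lies below `δ + δ_I` and equals `2` on `A`.
-/

open MeasureTheory

section SetFunctions

variable {X : Type*}

theorem IsSubmeasure.add {φ ψ : Set X → ℝ≥0∞} (hφ : IsSubmeasure φ) (hψ : IsSubmeasure ψ) :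
    IsSubmeasure fun A => φ A + ψ A :=
  ⟨by simp [hφ.1, hψ.1], fun A B hAB => add_le_add (hφ.2.1 A B hAB) (hψ.2.1 A B hAB),
    fun A B => (add_le_add (hφ.2.2 A B) (hψ.2.2 A B)).trans_eq (add_add_add_comm _ _ _ _)⟩

theorem IsFAMeasure.add {μ ν : Set X → ℝ≥0∞} (hμ : IsFAMeasure μ) (hν : IsFAMeasure ν) :
    IsFAMeasure fun A => μ A + ν A :=
  ⟨by simp [hμ.1, hν.1], fun A B hAB => by
    simp only [hμ.2 A B hAB, hν.2 A B hAB, add_add_add_comm]⟩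

theorem isSigmaMeasure_measure [MeasurableSpace X] [DiscreteMeasurableSpace X] (ν : Measure X) :
    IsSigmaMeasure fun A => ν A :=
  ⟨⟨measure_empty, fun _ _ hAB => measure_union hAB (.of_discrete)⟩,
    fun _ hA => measure_iUnion hA fun _ => .of_discrete⟩

open Classical in
theorem isFAMeasure_ultrafilter (U : Ultrafilter X) :
    IsFAMeasure fun A => if A ∈ U then (1 : ℝ≥0∞) else 0 := by
  refine ⟨by simp, fun A B hAB => ?_⟩
  by_cases hA : A ∈ U
  · have hB : B ∉ U := fun hB =>
      U.empty_notMem (Set.disjoint_iff_inter_eq_empty.1 hAB ▸ inter_mem hA hB)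
    simp [hA, hB]
  · simp [hA, Ultrafilter.union_mem_iff]

noncomputable def IsSigmaMeasure.toMeasure [MeasurableSpace X] {μ : Set X → ℝ≥0∞}
    (hμ : IsSigmaMeasure μ) : Measure X :=
  Measure.ofMeasurable (fun s _ => μ s) hμ.1.1 fun f _ hf => hμ.2 f hf

theorem IsSigmaMeasure.toMeasure_apply [MeasurableSpace X] {μ : Set X → ℝ≥0∞}
    (hμ : IsSigmaMeasure μ) {s : Set X} (hs : MeasurableSet s) : hμ.toMeasure s = μ s :=
  Measure.ofMeasurable_apply s hs

theorem IsSigmaMeasure.isLSC [Countable X] {μ : Set X → ℝ≥0∞} (hμ : IsSigmaMeasure μ) :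
    IsLSC μ := by
  classical
  let _ : MeasurableSpace X := ⊤
  have hν (s : Set X) : hμ.toMeasure s = μ s := hμ.toMeasure_apply trivial
  intro A
  simp only [← hν]
  refine le_antisymm ?_ (iSup₂_le fun F hF => measure_mono hF.1)
  have hA : A = ⋃ t : Finset X, A ∩ t := by
    ext x; simpa using fun _ => ⟨{x}, by simp⟩
  have hdir : Directed (· ⊆ ·) fun t : Finset X => A ∩ t := fun s t =>
    ⟨s ∪ t, Set.inter_subset_inter_right _ (by simp), Set.inter_subset_inter_right _ (by simp)⟩
  calc hμ.toMeasure A = ⨆ t : Finset X, hμ.toMeasure (A ∩ t) := by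
        conv_lhs => rw [hA]
        exact hdir.measure_iUnion
    _ ≤ _ := iSup_le fun t =>
        le_iSup₂_of_le (A ∩ t) ⟨Set.inter_subset_left, t.finite_toSet.inter_of_right A⟩ le_rfl

theorem le_hat {φ μ : Set X → ℝ≥0∞} (hμ : IsFAMeasure μ) (hle : ∀ B, μ B ≤ φ B) (A : Set X) :
    μ A ≤ hat φ A :=
  le_iSup₂_of_le μ ⟨hμ, hle⟩ le_rfl

theorem hat_le (φ : Set X → ℝ≥0∞) (A : Set X) : hat φ A ≤ φ A :=
  iSup₂_le fun _ hμ => hμ.2 A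

theorem le_hatSigma {φ μ : Set X → ℝ≥0∞} (hμ : IsSigmaMeasure μ) (hle : ∀ B, μ B ≤ φ B)
    (A : Set X) : μ A ≤ hatSigma φ A :=
  le_iSup₂_of_le μ ⟨hμ, hle⟩ le_rfl

theorem hatSigma_le_iSup_finite [Countable X] (φ : Set X → ℝ≥0∞) (A : Set X) :
    hatSigma φ A ≤ ⨆ (F : Set X) (_ : F ⊆ A ∧ F.Finite), φ F :=
  iSup₂_le fun _ hμ => (hμ.1.isLSC A).trans_le (iSup₂_mono fun F _ => hμ.2 F)

end SetFunctions

section Delta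

variable {I : Set (Set ℕ)} {A : Set ℕ}

theorem deltaI_of_mem (hA : A ∈ I) : deltaI I A = 0 := if_pos hA

theorem deltaI_of_notMem (hA : A ∉ I) : deltaI I A = 1 := if_neg hA

theorem deltaI_le_one : deltaI I A ≤ 1 := by
  unfold deltaI; split <;> simp

theorem isSubmeasure_deltaI (h0 : ∅ ∈ I) (hmono : ∀ A B, A ⊆ B → B ∈ I → A ∈ I)
    (hunion : ∀ A B, A ∈ I → B ∈ I → A ∪ B ∈ I) : IsSubmeasure (deltaI I) := by
  refine ⟨deltaI_of_mem h0, fun A B hAB => ?_, fun A B => ?_⟩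
  · by_cases hB : B ∈ I
    · simp [deltaI_of_mem hB, deltaI_of_mem (hmono A B hAB hB)]
    · exact deltaI_of_notMem hB ▸ deltaI_le_one
  · by_cases hA : A ∈ I
    · by_cases hB : B ∈ I
      · simp [deltaI_of_mem (hunion A B hA hB)]
      · exact deltaI_le_one.trans (deltaI_of_notMem hB ▸ le_add_self)
    · exact deltaI_le_one.trans (deltaI_of_notMem hA ▸ le_self_add)

theorem delta_eq_deltaI : delta = deltaI {∅} := rfl

theorem delta_le_one : delta A ≤ 1 := deltaI_le_one

theorem delta_of_nonempty (hA : A.Nonempty) : delta A = 1 := if_neg hA.ne_empty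

theorem isSubmeasure_delta : IsSubmeasure delta :=
  delta_eq_deltaI ▸ isSubmeasure_deltaI rfl (fun _ _ hAB hB => Set.subset_empty_iff.1 (hB ▸ hAB))
    fun _ _ hA hB => by simp_all

theorem exists_isSigmaMeasure_le_delta_eq (A : Set ℕ) :
    ∃ μ, IsSigmaMeasure μ ∧ (∀ B, μ B ≤ delta B) ∧ μ A = delta A := by
  have hdirac (a : ℕ) (B : Set ℕ) : Measure.dirac a B = B.indicator 1 a := Measure.dirac_apply _ _
  rcases A.eq_empty_or_nonempty with rfl | ⟨a, ha⟩
  · exact ⟨fun _ => 0, ⟨⟨rfl, by simp⟩, by simp⟩, by simp, by simp [delta]⟩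
  refine ⟨fun B => Measure.dirac a B, isSigmaMeasure_measure _, fun B => ?_, ?_⟩
  · by_cases hB : a ∈ B
    · simp [hdirac, hB, delta_of_nonempty ⟨a, hB⟩]
    · simp [hdirac, hB]
  · simp [hdirac, ha, delta_of_nonempty ⟨a, ha⟩]

theorem exists_ultrafilter_mem_forall_notMem (h0 : ∅ ∈ I)
    (hmono : ∀ A B, A ⊆ B → B ∈ I → A ∈ I) (hunion : ∀ A B, A ∈ I → B ∈ I → A ∪ B ∈ I)
    (hA : A ∉ I) : ∃ U : Ultrafilter ℕ, A ∈ U ∧ ∀ S ∈ I, S ∉ U := by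
  let f := comk (· ∈ I) h0 (fun t ht s hst => hmono s t hst ht) fun s hs t ht => hunion s t hs ht
  have hf (S : Set ℕ) : Sᶜ ∈ f ↔ S ∈ I := by simp [f]
  obtain ⟨U, hUf, hAU⟩ : ∃ U : Ultrafilter ℕ, ↑U ≤ f ∧ A ∈ U := by
    by_contra! h
    exact hA ((hf A).1 (mem_iff_ultrafilter.2 fun U hU => U.compl_mem_iff_notMem.2 (h U hU)))
  exact ⟨U, hAU, fun S hS => U.compl_mem_iff_notMem.1 (hUf ((hf S).2 hS))⟩

theorem exists_isFAMeasure_le_deltaI_eq (h0 : ∅ ∈ I)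
    (hmono : ∀ A B, A ⊆ B → B ∈ I → A ∈ I) (hunion : ∀ A B, A ∈ I → B ∈ I → A ∪ B ∈ I)
    (A : Set ℕ) : ∃ μ, IsFAMeasure μ ∧ (∀ B, μ B ≤ deltaI I B) ∧ μ A = deltaI I A := by
  classical
  by_cases hA : A ∈ I
  · exact ⟨fun _ => 0, ⟨rfl, by simp⟩, by simp, by simp [deltaI_of_mem hA]⟩
  obtain ⟨U, hAU, hU⟩ := exists_ultrafilter_mem_forall_notMem h0 hmono hunion hA
  refine ⟨_, isFAMeasure_ultrafilter U, fun B => ?_, by simp [hAU, deltaI_of_notMem hA]⟩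
  by_cases hB : B ∈ I
  · simp [hU B hB]
  · rw [deltaI_of_notMem hB]
    split_ifs <;> simp

theorem iSup_finite_delta_add_deltaI_le (hfin : ∀ A : Set ℕ, A.Finite → A ∈ I) (A : Set ℕ) :
    ⨆ (F : Set ℕ) (_ : F ⊆ A ∧ F.Finite), delta F + deltaI I F ≤ delta A :=
  iSup₂_le fun F hF => by
    rw [deltaI_of_mem (hfin F hF.2), add_zero]
    exact isSubmeasure_delta.2.1 F A hF.1

theorem not_isLSC_delta_add_deltaI (huniv : Set.univ ∉ I)
    (hfin : ∀ A : Set ℕ, A.Finite → A ∈ I) : ¬ IsLSC fun A => delta A + deltaI I A := by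
  intro h
  have : (2 : ℝ≥0∞) ≤ 1 :=
    calc 2 = delta Set.univ + deltaI I Set.univ := by
          rw [delta_of_nonempty Set.univ_nonempty, deltaI_of_notMem huniv, one_add_one_eq_two]
      _ = ⨆ (F : Set ℕ) (_ : F ⊆ Set.univ ∧ F.Finite), delta F + deltaI I F := h Set.univ
      _ ≤ delta Set.univ := iSup_finite_delta_add_deltaI_le hfin Set.univ
      _ ≤ 1 := delta_le_one
  norm_num at this

end Delta

/-- For an ideal `I` on `ℕ` containing all finite sets, `δ + δ_I` is a non-lsc submeasure with
`(δ + δ_I)̂_σ = δ` and `(δ + δ_I)̂ = δ + δ_I`. -/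
theorem stmt5 (I : Set (Set ℕ)) (hI : IsIdeal I) (hfin : ∀ A : Set ℕ, A.Finite → A ∈ I) :
    IsSubmeasure (fun A => delta A + deltaI I A) ∧
    ¬ IsLSC (fun A => delta A + deltaI I A) ∧
    (∀ A, hatSigma (fun A => delta A + deltaI I A) A = delta A) ∧
    (∀ A, hat (fun A => delta A + deltaI I A) A = delta A + deltaI I A) := by
  obtain ⟨h0, huniv, hmono, hunion⟩ := hI
  refine ⟨isSubmeasure_delta.add (isSubmeasure_deltaI h0 hmono hunion),
    not_isLSC_delta_add_deltaI huniv hfin, fun A => le_antisymm ?_ ?_,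
    fun A => le_antisymm (hat_le _ A) ?_⟩
  · exact (hatSigma_le_iSup_finite _ A).trans (iSup_finite_delta_add_deltaI_le hfin A)
  · obtain ⟨μ, hμ, hμδ, hμA⟩ := exists_isSigmaMeasure_le_delta_eq A
    exact hμA ▸ le_hatSigma hμ (fun B => (hμδ B).trans le_self_add) A
  · obtain ⟨μ, hμ, hμδ, hμA⟩ := exists_isSigmaMeasure_le_delta_eq A
    obtain ⟨ν, hν, hνδ, hνA⟩ := exists_isFAMeasure_le_deltaI_eq h0 hmono hunion A
    rw [← hμA, ← hνA]
    exact le_hat (hμ.1.add hν) (fun B => add_le_add (hμδ B) (hνδ B)) A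
end

section
/- Let I_ε = {A ⊆ ℕ : limsup_{n→∞} ln(|A ∩ [0,n)|)/ln(n) = 0} be the ideal of sets of exponential density zero. There is no family 𝓕 of finite subsets of ℕ and no function f : ℕ → (0,∞) such that I_ε = I_{f,𝓕}, where I_{f,𝓕} = Exh(sup_{F∈𝓕} μ_{f,F}) with μ_{f,F}(A) = ∑_{i ∈ A∩F} f(i). -/
open Filter
open scoped ENNReal

/-- The measure `μ_{f,F} A = ∑_{i ∈ A ∩ F} f i` (as an `ℝ≥0∞`-valued function). -/
noncomputable def muFF (f : ℕ → ℝ) (F : Set ℕ) (A : Set ℕ) : ℝ≥0∞ :=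
  ∑' i : ↥(A ∩ F), ENNReal.ofReal (f i)

/-- The exhaustive ideal of a submeasure `φ` on `ℕ`. -/
def Exh (φ : Set ℕ → ℝ≥0∞) : Set (Set ℕ) :=
  {A | Tendsto (fun n => φ (A \ Set.Iio n)) atTop (nhds 0)}

/-- The ideal of sets of exponential density zero. -/
noncomputable def expDensityZero : Set (Set ℕ) :=
  {A | Filter.limsup (fun n => Real.log ((A ∩ Set.Iio n).ncard : ℝ) / Real.log n) atTop = 0}


/-!
Write `φ = ⨆ F ∈ 𝓕, μ_{f,F}` and suppose `I_ε = Exh φ`. As `ℕ ∉ I_ε`, every tail of `ℕ` has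
`φ`-mass above some `δ > 0`, so arbitrarily far out there are finite pieces `B ⊆ F ∈ 𝓕` with
`∑_B f ≥ δ`. If for every `k` such pieces can be taken `k`-thin (`|B ∩ [0,n)|^k ≤ n` for all `n`),
gluing pieces of growing thinness at rapidly growing positions gives a set in `I_ε` whose tails
all have mass `≥ δ`. Otherwise, beyond some point no such piece is `K`-thin for a fixed `K`.
Applied to singletons, the first case shows that `f < δ` on covered points far out, so these
pieces can be trimmed to mass `≤ 2δ`; an initial segment of `t` points witnessing non-thinness
then contains, by Markov's inequality, `≥ √t` points of arbitrarily small total mass. Gluing such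
sets of masses `2⁻ᵐ` gives a set of finite `f`-mass, hence in `Exh φ`, but not in `I_ε`.
-/

open Filter Set

lemma log_natCast_le_log_natCast {a b : ℕ} (h : a ≤ b) : Real.log a ≤ Real.log b := by
  rcases a.eq_zero_or_pos with rfl | ha
  · simpa using Real.log_natCast_nonneg b
  · exact Real.log_le_log (by exact_mod_cast ha) (by exact_mod_cast h)

lemma pow_le_of_pow_le_of_le {x n k i : ℕ} (hk : 0 < k) (hki : k ≤ i) (h : x ^ i ≤ n) :
    x ^ k ≤ n := by
  rcases x.eq_zero_or_pos with rfl | hx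
  · simp [zero_pow hk.ne']
  · exact (Nat.pow_le_pow_right hx hki).trans h

lemma exists_le_mem_Ico_of_strictMono {N : ℕ → ℕ} (hN : StrictMono N) {k n : ℕ}
    (hn : N k ≤ n) : ∃ i, k ≤ i ∧ n ∈ Ico (N i) (N (i + 1)) := by
  have hmem : n ∈ Ico (N (k + 0)) (N (k + (n + 1))) :=
    ⟨hn, by have := hN.le_apply (x := k + (n + 1)); omega⟩
  obtain ⟨j, -, hj⟩ := mem_iUnion₂.1 (Ico_subset_biUnion_Ico (n + 1) (fun j => N (k + j)) hmem)
  exact ⟨k + j, by omega, hj⟩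

lemma Finset.exists_subset_sum_mem_Icc {ι : Type*} [DecidableEq ι] {B : Finset ι} {f : ι → ℝ}
    {c l : ℝ} (hle : ∀ i ∈ B, f i ≤ l) (hcB : c ≤ ∑ i ∈ B, f i) (h0 : 0 ≤ c + l) :
    ∃ B' ⊆ B, ∑ i ∈ B', f i ∈ Set.Icc c (c + l) := by
  induction B using Finset.induction_on with
  | empty => exact ⟨∅, subset_rfl, by simpa using hcB, by simpa using h0⟩
  | insert x B hx ih =>
    by_cases hsum : ∑ i ∈ insert x B, f i ≤ c + l
    · exact ⟨_, subset_rfl, hcB, hsum⟩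
    rw [Finset.sum_insert hx] at hcB hsum
    obtain ⟨B', hB', hmem⟩ := ih (fun i hi => hle i (Finset.mem_insert_of_mem hi))
      (by linarith [hle x (Finset.mem_insert_self x B)])
    exact ⟨B', hB'.trans (Finset.subset_insert x B), hmem⟩

lemma Finset.exists_subset_card_eq_sum_mul_le {ι : Type*} {B : Finset ι} {f : ι → ℝ}
    (hf : ∀ i ∈ B, 0 ≤ f i) {s : ℕ} (hs : 2 * s ≤ B.card) :
    ∃ Q ⊆ B, Q.card = s ∧ (∑ i ∈ Q, f i) * B.card ≤ 2 * s * ∑ i ∈ B, f i := by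
  set M := ∑ i ∈ B, f i
  -- Markov: at most half of the points of `B` exceed twice the average
  have hheavy : 2 * (B.filter fun i => ¬ f i * B.card ≤ 2 * M).card ≤ B.card := by
    set H := B.filter fun i => ¬ f i * B.card ≤ 2 * M
    by_contra! hcon
    have hne : H.Nonempty := Finset.card_pos.1 (by omega)
    have hlt : ∑ _i ∈ H, 2 * M < ∑ i ∈ H, f i * B.card :=
      Finset.sum_lt_sum_of_nonempty hne fun i hi => not_le.1 (Finset.mem_filter.1 hi).2
    have hHM : ∑ i ∈ H, f i ≤ M :=
      Finset.sum_le_sum_of_subset_of_nonneg (Finset.filter_subset _ _) fun i hi _ => hf i hi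
    rw [Finset.sum_const, nsmul_eq_mul, ← Finset.sum_mul] at hlt
    have hM : 0 ≤ M := Finset.sum_nonneg hf
    have hcon' : (B.card : ℝ) + 1 ≤ 2 * H.card := by exact_mod_cast hcon
    nlinarith [mul_le_mul_of_nonneg_right hHM (Nat.cast_nonneg (α := ℝ) B.card)]
  have hlight : s ≤ (B.filter fun i => f i * B.card ≤ 2 * M).card := by
    have := Finset.card_filter_add_card_filter_not (s := B) (fun i => f i * B.card ≤ 2 * M)
    omega
  obtain ⟨Q, hQ, hcard⟩ := Finset.exists_subset_card_eq hlight
  refine ⟨Q, hQ.trans (Finset.filter_subset _ _), hcard, ?_⟩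
  calc (∑ i ∈ Q, f i) * B.card = ∑ i ∈ Q, f i * B.card := Finset.sum_mul _ _ _
    _ ≤ ∑ _i ∈ Q, 2 * M := Finset.sum_le_sum fun i hi => (Finset.mem_filter.1 (hQ hi)).2
    _ = 2 * s * M := by rw [Finset.sum_const, hcard, nsmul_eq_mul]; ring

lemma Finset.exists_subset_sq_card_ge_sum_mul_le {ι : Type*} {B : Finset ι} {f : ι → ℝ}
    (hf : ∀ i ∈ B, 0 ≤ f i) {R : ℕ} (hR : 2 ≤ R) (hB : 2 * R * R ≤ B.card) :
    ∃ Q ⊆ B, B.card ≤ Q.card ^ 2 ∧ (∑ i ∈ Q, f i) * R ≤ 2 * ∑ i ∈ B, f i := by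
  set t := B.card
  have hsR : t / R * R ≤ t := Nat.div_mul_le_self t R
  have hts : t < R * (t / R + 1) := Nat.lt_mul_div_succ t (by omega)
  have h2R : 2 * R ≤ t / R := (Nat.le_div_iff_mul_le (by omega)).2 hB
  obtain ⟨Q, hQB, hQ, hsum⟩ := exists_subset_card_eq_sum_mul_le hf (s := t / R) (by nlinarith)
  refine ⟨Q, hQB, by rw [hQ]; nlinarith, ?_⟩
  have ht : (0 : ℝ) < t := by exact_mod_cast (show 0 < t by nlinarith)
  have hsR' : ((t / R : ℕ) : ℝ) * R ≤ t := by exact_mod_cast hsR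
  have hM : 0 ≤ ∑ i ∈ B, f i := Finset.sum_nonneg hf
  refine le_of_mul_le_mul_right ?_ ht
  calc (∑ i ∈ Q, f i) * R * t = (∑ i ∈ Q, f i) * t * R := by ring
    _ ≤ 2 * (t / R : ℕ) * (∑ i ∈ B, f i) * R := by gcongr
    _ = 2 * (∑ i ∈ B, f i) * ((t / R : ℕ) * R) := by ring
    _ ≤ 2 * (∑ i ∈ B, f i) * t := by gcongr

lemma ncard_inter_Iio_le (A : Set ℕ) (n : ℕ) : (A ∩ Iio n).ncard ≤ n :=
  (ncard_le_ncard inter_subset_right (finite_Iio n)).trans (ncard_Iio_nat n).le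

lemma mem_expDensityZero_of_pow_le {A : Set ℕ}
    (h : ∀ k, 0 < k → ∃ C : ℕ, ∀ᶠ n in atTop, (A ∩ Iio n).ncard ^ k ≤ C * n) :
    A ∈ expDensityZero := by
  refine Tendsto.limsup_eq (tendsto_order.2 ⟨fun a ha => Eventually.of_forall fun n =>
    ha.trans_le (div_nonneg (Real.log_natCast_nonneg _) (Real.log_natCast_nonneg _)), ?_⟩)
  intro a ha
  obtain ⟨k, hk⟩ := exists_nat_one_div_lt (half_pos ha)
  obtain ⟨C, hC⟩ := h (k + 1) k.succ_pos
  filter_upwards [hC, eventually_ge_atTop (max C 2)] with n hcount hn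
  have hlog : 0 < Real.log n := Real.log_pos (by exact_mod_cast (le_max_right C 2).trans hn)
  have hsq : (A ∩ Iio n).ncard ^ (k + 1) ≤ n ^ 2 :=
    hcount.trans (by rw [sq]; exact Nat.mul_le_mul_right n ((le_max_left C 2).trans hn))
  have key : ((k + 1 : ℕ) : ℝ) * Real.log (A ∩ Iio n).ncard ≤ 2 * Real.log n := by
    have := log_natCast_le_log_natCast hsq
    push_cast at this
    rwa [Real.log_pow, Real.log_pow] at this
  push_cast at key
  have hratio : Real.log (A ∩ Iio n).ncard / Real.log n ≤ 2 * (1 / ((k : ℝ) + 1)) := by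
    rw [div_le_iff₀ hlog, mul_one_div, div_mul_eq_mul_div, le_div_iff₀ (by positivity)]
    linarith
  linarith

lemma notMem_expDensityZero_of_frequently {A : Set ℕ} {K : ℕ} (hK : 0 < K)
    (h : ∃ᶠ n in atTop, n ≤ (A ∩ Iio n).ncard ^ K) : A ∉ expDensityZero := by
  intro hA
  have hbdd : IsBoundedUnder (· ≤ ·) atTop
      (fun n : ℕ => Real.log (A ∩ Iio n).ncard / Real.log n) :=
    isBoundedUnder_of ⟨1, fun n => div_le_one_of_le₀
      (log_natCast_le_log_natCast (ncard_inter_Iio_le A n)) (Real.log_natCast_nonneg n)⟩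
  have hfreq : ∃ᶠ n : ℕ in atTop, 1 / (K : ℝ) ≤ Real.log (A ∩ Iio n).ncard / Real.log n := by
    refine (h.and_eventually (eventually_ge_atTop 2)).mono fun n ⟨hn, hn2⟩ => ?_
    have hlog : 0 < Real.log n := Real.log_pos (by exact_mod_cast hn2)
    have := log_natCast_le_log_natCast hn
    push_cast at this
    rw [Real.log_pow] at this
    rw [div_le_div_iff₀ (by exact_mod_cast hK) hlog, one_mul]
    linarith
  have := le_limsup_of_frequently_le hfreq hbdd
  rw [hA] at this
  exact (this.trans_lt' (by positivity)).false

lemma univ_notMem_expDensityZero : (univ : Set ℕ) ∉ expDensityZero :=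
  notMem_expDensityZero_of_frequently one_pos
    (Frequently.of_forall fun n => by simp)

def IsThin (k : ℕ) (B : Set ℕ) : Prop := ∀ n, (B ∩ Iio n).ncard ^ k ≤ n

lemma isThin_singleton (k i : ℕ) : IsThin (k + 1) {i} := by
  intro n
  rcases n.eq_zero_or_pos with rfl | hn
  · simp
  · have : ({i} ∩ Iio n).ncard ≤ 1 :=
      (ncard_le_ncard inter_subset_left (finite_singleton i)).trans (ncard_singleton i).le
    exact (pow_le_one₀ (Nat.zero_le _) this).trans hn

lemma exists_lt_card_filter_pow_of_not_isThin {K : ℕ} {B : Finset ℕ} (h : ¬ IsThin K B) :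
    ∃ n, n < (B.filter (· < n)).card ^ K := by
  simp only [IsThin, not_forall, not_le] at h
  obtain ⟨n, hn⟩ := h
  exact ⟨n, by rwa [← ncard_coe_finset, Finset.coe_filter]⟩

lemma iUnion_mem_expDensityZero {C : ℕ → Set ℕ} {N : ℕ → ℕ} (hN : StrictMono N)
    (hC : ∀ i, C i ⊆ Ico (N i) (N (i + 1))) (hthin : ∀ i, IsThin (i + 1) (C i))
    (hlow : ∀ i, ((⋃ j, C j) ∩ Iio (N i)).ncard ^ (i + 1) ≤ N i) :
    ⋃ j, C j ∈ expDensityZero := by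
  refine mem_expDensityZero_of_pow_le fun k hk => ⟨2 ^ k, ?_⟩
  filter_upwards [eventually_ge_atTop (N k)] with n hn
  obtain ⟨i, hki, hNi, hnN⟩ := exists_le_mem_Ico_of_strictMono hN hn
  have hsplit : (⋃ j, C j) ∩ Iio n ⊆ ((⋃ j, C j) ∩ Iio (N i)) ∪ (C i ∩ Iio n) := by
    rintro x ⟨hxA, hxn⟩
    obtain ⟨j, hj⟩ := mem_iUnion.1 hxA
    by_cases hx : x < N i
    · exact Or.inl ⟨hxA, hx⟩
    · obtain ⟨hjx, hxj⟩ := hC j hj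
      have h1 : j < i + 1 := hN.lt_iff_lt.1 (by simp only [mem_Iio] at hxn; omega)
      have h2 : i < j + 1 := hN.lt_iff_lt.1 (by omega)
      obtain rfl : j = i := by omega
      exact Or.inr ⟨hj, hxn⟩
  have hcount := (ncard_le_ncard hsplit ((finite_Iio _).inter_of_right _ |>.union
    ((finite_Iio _).inter_of_right _))).trans (ncard_union_le _ _)
  have ha := pow_le_of_pow_le_of_le hk (by omega : k ≤ i + 1) ((hlow i).trans hNi)
  have hb := pow_le_of_pow_le_of_le hk (by omega : k ≤ i + 1) (hthin i n)
  calc ((⋃ j, C j) ∩ Iio n).ncard ^ k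
      ≤ (((⋃ j, C j) ∩ Iio (N i)).ncard + (C i ∩ Iio n).ncard) ^ k := Nat.pow_le_pow_left hcount k
    _ ≤ 2 ^ (k - 1) * (((⋃ j, C j) ∩ Iio (N i)).ncard ^ k + (C i ∩ Iio n).ncard ^ k) :=
        add_pow_le (Nat.zero_le _) (Nat.zero_le _) k
    _ ≤ 2 ^ (k - 1) * (n + n) := by gcongr
    _ = 2 ^ k * n := by rw [← two_mul, ← mul_assoc, ← pow_succ, Nat.sub_add_cancel hk]

lemma exists_strictMono_iUnion_mem_expDensityZero (B : ℕ → ℕ → Finset ℕ)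
    (hB : ∀ k N, ∀ i ∈ B k N, N ≤ i) (hthin : ∀ k N, IsThin (k + 1) (B k N)) :
    ∃ N : ℕ → ℕ, StrictMono N ∧ (⋃ i, (B i (N i) : Set ℕ)) ∈ expDensityZero := by
  -- `N (i + 1)` is a high power of a bound on all points of the first `i + 1` blocks,
  -- which makes these points negligible from `N (i + 1)` on
  obtain ⟨N, hN0, hNs⟩ : ∃ N : ℕ → ℕ, N 0 = 0 ∧
      ∀ i, N (i + 1) = (N i + (B i (N i)).sup id + 1) ^ (i + 2) :=
    ⟨fun i => Nat.rec 0 (fun i Ni => (Ni + (B i Ni).sup id + 1) ^ (i + 2)) i, rfl, fun _ => rfl⟩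
  have hM : ∀ i, N i + (B i (N i)).sup id + 1 ≤ N (i + 1) := fun i =>
    hNs i ▸ Nat.le_self_pow (by omega) _
  have hlt : ∀ i, ∀ x ∈ B i (N i), x < N i + (B i (N i)).sup id + 1 := fun i x hx => by
    have := Finset.le_sup (f := id) hx
    simp only [id] at this
    omega
  have hmono : StrictMono N := strictMono_nat_of_lt_succ fun i => by have := hM i; omega
  have hC : ∀ i, (B i (N i) : Set ℕ) ⊆ Ico (N i) (N (i + 1)) := fun i x hx =>
    ⟨hB _ _ x hx, (hlt i x hx).trans_le (hM i)⟩
  refine ⟨N, hmono, iUnion_mem_expDensityZero hmono hC (fun i => hthin i (N i)) fun i => ?_⟩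
  cases i with
  | zero => simp [hN0]
  | succ i =>
    have hsub : (⋃ j, (B j (N j) : Set ℕ)) ∩ Iio (N (i + 1)) ⊆
        Iio (N i + (B i (N i)).sup id + 1) := by
      rintro x ⟨hx, hxN⟩
      obtain ⟨j, hj⟩ := mem_iUnion.1 hx
      have hxj := hC j hj
      rcases lt_trichotomy j i with h | rfl | h
      · have := hmono.monotone (by omega : j + 1 ≤ i)
        simp only [mem_Ico] at hxj
        simp only [mem_Iio]
        omega
      · exact hlt j x hj
      · have := hmono.monotone (by omega : i + 1 ≤ j)
        simp only [mem_Ico] at hxj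
        simp only [mem_Iio] at hxN
        omega
    calc ((⋃ j, (B j (N j) : Set ℕ)) ∩ Iio (N (i + 1))).ncard ^ (i + 1 + 1)
        ≤ (N i + (B i (N i)).sup id + 1) ^ (i + 2) :=
          Nat.pow_le_pow_left ((ncard_le_ncard hsub (finite_Iio _)).trans (ncard_Iio_nat _).le) _
      _ = N (i + 1) := (hNs i).symm

lemma exists_notMem_expDensityZero_tsum_ne_top {f : ℕ → ℝ} (hf : ∀ i, 0 ≤ f i) {K : ℕ}
    (hK : 0 < K)
    (h : ∀ ε > 0, ∀ q, ∃ Q : Finset ℕ, ∃ n, q < n ∧ ↑Q ⊆ Ico q n ∧ n ≤ Q.card ^ K ∧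
      ∑ i ∈ Q, f i ≤ ε) :
    ∃ A ∉ expDensityZero, ∑' i : A, ENNReal.ofReal (f i) ≠ ∞ := by
  choose Q n hqn hQ hcard hsum using fun m : ℕ => h ((1 / 2) ^ m) (by positivity)
  obtain ⟨q, hqs⟩ : ∃ q : ℕ → ℕ, ∀ m, q (m + 1) = n m (q m) :=
    ⟨fun m => Nat.rec 0 (fun m qm => n m qm) m, fun _ => rfl⟩
  have hmono : StrictMono q := strictMono_nat_of_lt_succ fun m => hqs m ▸ hqn m (q m)
  refine ⟨⋃ m, ↑(Q m (q m)), notMem_expDensityZero_of_frequently hK ?_, ?_⟩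
  · refine frequently_atTop.2 fun a => ⟨q (a + 1), (hmono.le_apply).trans' (by omega), ?_⟩
    have hsub : (↑(Q a (q a)) : Set ℕ) ⊆ (⋃ m, ↑(Q m (q m))) ∩ Iio (q (a + 1)) := fun x hx =>
      ⟨mem_iUnion.2 ⟨a, hx⟩, hqs a ▸ (hQ a (q a) hx).2⟩
    calc q (a + 1) ≤ (Q a (q a)).card ^ K := hqs a ▸ hcard a (q a)
      _ ≤ _ := Nat.pow_le_pow_left (by
        simpa using ncard_le_ncard hsub ((finite_Iio _).inter_of_right _)) K
  · refine ne_top_of_le_ne_top (ENNReal.ofReal_ne_top (r := ∑' m : ℕ, (1 / 2 : ℝ) ^ m)) ?_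
    calc ∑' i : ↥(⋃ m, (Q m (q m) : Set ℕ)), ENNReal.ofReal (f i)
        ≤ ∑' m, ∑' i : ↥(Q m (q m) : Set ℕ), ENNReal.ofReal (f i) :=
          ENNReal.tsum_iUnion_le_tsum (fun i => ENNReal.ofReal (f i)) _
      _ = ∑' m, ENNReal.ofReal (∑ i ∈ Q m (q m), f i) := by
          congr 1; ext m
          rw [ENNReal.ofReal_sum_of_nonneg fun i _ => hf i]
          exact Finset.tsum_subtype' _ fun i => ENNReal.ofReal (f i)
      _ ≤ ∑' m : ℕ, ENNReal.ofReal ((1 / 2) ^ m) :=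
          ENNReal.tsum_le_tsum fun m => ENNReal.ofReal_le_ofReal (hsum m (q m))
      _ = ENNReal.ofReal (∑' m : ℕ, (1 / 2 : ℝ) ^ m) :=
          (ENNReal.ofReal_tsum_of_nonneg (fun _ => by positivity) summable_geometric_two).symm

section Submeasure

variable {f : ℕ → ℝ}

lemma muFF_mono (F : Set ℕ) {A A' : Set ℕ} (h : A ⊆ A') : muFF f F A ≤ muFF f F A' :=
  ENNReal.tsum_mono_subtype (fun i => ENNReal.ofReal (f i)) (inter_subset_inter_left F h)

lemma muFF_le_tsum (F A : Set ℕ) : muFF f F A ≤ ∑' i : A, ENNReal.ofReal (f i) :=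
  ENNReal.tsum_mono_subtype (fun i => ENNReal.ofReal (f i)) inter_subset_left

lemma ofReal_sum_le_muFF (hf : ∀ i, 0 ≤ f i) {B : Finset ℕ} {F A : Set ℕ} (hB : ↑B ⊆ A ∩ F) :
    ENNReal.ofReal (∑ i ∈ B, f i) ≤ muFF f F A := by
  rw [ENNReal.ofReal_sum_of_nonneg fun i _ => hf i, ← Finset.tsum_subtype]
  exact ENNReal.tsum_mono_subtype (fun i => ENNReal.ofReal (f i)) hB

lemma exists_finset_lt_sum_of_lt_muFF (hf : ∀ i, 0 ≤ f i) {c : ℝ} {F A : Set ℕ}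
    (h : ENNReal.ofReal c < muFF f F A) : ∃ B : Finset ℕ, ↑B ⊆ A ∩ F ∧ c < ∑ i ∈ B, f i := by
  rw [muFF, ENNReal.tsum_eq_iSup_sum, lt_iSup_iff] at h
  obtain ⟨s, hs⟩ := h
  refine ⟨s.map (Function.Embedding.subtype _), fun x hx => ?_, ?_⟩
  · obtain ⟨y, -, rfl⟩ := Finset.mem_map.1 hx
    exact y.2
  · rw [← ENNReal.ofReal_sum_of_nonneg (s := s) fun i _ => hf i] at hs
    rw [Finset.sum_map]
    exact (ENNReal.ofReal_lt_ofReal_iff'.1 hs).1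

variable {𝓕 : Set (Set ℕ)}

lemma mem_Exh_of_tsum_ne_top {A : Set ℕ} (h : ∑' i : A, ENNReal.ofReal (f i) ≠ ∞) :
    A ∈ Exh (fun A => ⨆ F ∈ 𝓕, muFF f F A) := by
  set g := A.indicator fun i => ENNReal.ofReal (f i)
  have hg : ∑' i, g i ≠ ∞ := by rwa [← tsum_subtype]
  have htail := (ENNReal.tendsto_tsum_compl_atTop_zero hg).comp tendsto_finset_range
  refine tendsto_of_tendsto_of_tendsto_of_le_of_le tendsto_const_nhds htail (fun _ => zero_le)
    fun n => iSup₂_le fun F _ => (muFF_le_tsum F _).trans ?_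
  calc ∑' i : ↥(A \ Iio n), ENNReal.ofReal (f i) = ∑' i : ↥(A \ Iio n), g i :=
        tsum_congr fun i => (indicator_of_mem i.2.1 (fun i => ENNReal.ofReal (f i))).symm
    _ ≤ ∑' i : {i // i ∉ Finset.range n}, g i :=
        ENNReal.tsum_mono_subtype g fun i hi =>
          (Finset.mem_range.not.2 hi.2 : i ∉ Finset.range n)

end Submeasure

def IsHeavyPiece (𝓕 : Set (Set ℕ)) (f : ℕ → ℝ) (c : ℝ) (N : ℕ) (B : Finset ℕ) : Prop :=
  (∃ F ∈ 𝓕, ↑B ⊆ F) ∧ (∀ i ∈ B, N ≤ i) ∧ c ≤ ∑ i ∈ B, f i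

section HeavyPieces

variable {𝓕 : Set (Set ℕ)} {f : ℕ → ℝ}

lemma IsHeavyPiece.ofReal_le_iSup (hf : ∀ i, 0 ≤ f i) {c : ℝ} {N : ℕ} {B : Finset ℕ}
    (hB : IsHeavyPiece 𝓕 f c N B) {A : Set ℕ} (hA : ↑B ⊆ A) :
    ENNReal.ofReal c ≤ ⨆ F ∈ 𝓕, muFF f F A := by
  obtain ⟨⟨F, hF, hBF⟩, -, hc⟩ := hB
  exact (ENNReal.ofReal_le_ofReal hc).trans
    ((ofReal_sum_le_muFF hf (subset_inter hA hBF)).trans (le_iSup₂_of_le F hF le_rfl))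

lemma exists_isHeavyPiece (hf : ∀ i, 0 ≤ f i)
    (h : univ ∉ Exh (fun A => ⨆ F ∈ 𝓕, muFF f F A)) :
    ∃ δ > 0, ∀ N, ∃ B, IsHeavyPiece 𝓕 f δ N B := by
  have hanti : Antitone fun n : ℕ => ⨆ F ∈ 𝓕, muFF f F (univ \ Iio n) := fun a b hab =>
    iSup₂_mono fun F _ => muFF_mono F (sdiff_subset_sdiff_right (Iio_subset_Iio hab))
  have hinf : ⨅ n : ℕ, ⨆ F ∈ 𝓕, muFF f F (univ \ Iio n) ≠ 0 := fun h0 => by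
    have := tendsto_atTop_iInf hanti
    rw [h0] at this
    exact h this
  obtain ⟨δ, -, hδ0, hδ⟩ := ENNReal.lt_iff_exists_real_btwn.1 (pos_iff_ne_zero.2 hinf)
  refine ⟨δ, ENNReal.ofReal_pos.1 hδ0, fun N => ?_⟩
  obtain ⟨F, hF, hlt⟩ : ∃ F ∈ 𝓕, ENNReal.ofReal δ < muFF f F (univ \ Iio N) := by
    simpa only [lt_iSup_iff, exists_prop] using hδ.trans_le (iInf_le _ N)
  obtain ⟨B, hB, hsum⟩ := exists_finset_lt_sum_of_lt_muFF hf hlt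
  exact ⟨B, ⟨F, hF, fun x hx => (hB hx).2⟩, fun i hi => not_lt.1 (hB hi).1.2, hsum.le⟩

lemma not_forall_exists_isHeavyPiece_isThin (hf : ∀ i, 0 ≤ f i)
    (hEq : expDensityZero = Exh (fun A => ⨆ F ∈ 𝓕, muFF f F A)) {c : ℝ} (hc : 0 < c) :
    ¬ ∀ k N, ∃ B, IsHeavyPiece 𝓕 f c N B ∧ IsThin (k + 1) B := by
  intro h
  choose B hheavy hthin using h
  obtain ⟨N, hN, hA⟩ :=
    exists_strictMono_iUnion_mem_expDensityZero B (fun k N => (hheavy k N).2.1) hthin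
  rw [hEq] at hA
  obtain ⟨m, hm⟩ := eventually_atTop.1 (hA.eventually_lt_const (ENNReal.ofReal_pos.2 hc))
  refine (hm (N m) hN.le_apply).not_ge ((hheavy m (N m)).ofReal_le_iSup hf fun x hx => ?_)
  exact ⟨mem_iUnion.2 ⟨m, hx⟩, not_lt.2 ((hheavy m (N m)).2.1 x hx)⟩

lemma finite_setOf_exists_mem_and_le (hf : ∀ i, 0 ≤ f i)
    (hEq : expDensityZero = Exh (fun A => ⨆ F ∈ 𝓕, muFF f F A)) {c : ℝ} (hc : 0 < c) :
    {i | (∃ F ∈ 𝓕, i ∈ F) ∧ c ≤ f i}.Finite := by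
  by_contra hinf
  refine not_forall_exists_isHeavyPiece_isThin hf hEq hc fun k N => ?_
  obtain ⟨i, ⟨⟨F, hF, hiF⟩, hci⟩, hNi⟩ := Set.Infinite.exists_gt hinf N
  exact ⟨{i}, ⟨⟨F, hF, by simpa using hiF⟩, by simpa using hNi.le, by simpa using hci⟩,
    by simpa using isThin_singleton k i⟩

lemma exists_isHeavyPiece_sum_le {δ : ℝ} (hδ : 0 < δ)
    (hsupply : ∀ N, ∃ B, IsHeavyPiece 𝓕 f δ N B)
    (hlight : {i | (∃ F ∈ 𝓕, i ∈ F) ∧ δ ≤ f i}.Finite) (N : ℕ) :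
    ∃ B, IsHeavyPiece 𝓕 f δ N B ∧ ∑ i ∈ B, f i ≤ 2 * δ := by
  obtain ⟨ub, hub⟩ := hlight.bddAbove
  obtain ⟨B₀, ⟨F, hF, hB₀F⟩, hB₀N, hB₀δ⟩ := hsupply (N + ub + 1)
  have hle : ∀ i ∈ B₀, f i ≤ δ := fun i hi => by
    by_contra! hfi
    have := hub ⟨⟨F, hF, hB₀F hi⟩, hfi.le⟩
    have := hB₀N i hi
    omega
  obtain ⟨B, hB, hmem⟩ := Finset.exists_subset_sum_mem_Icc hle hB₀δ (by linarith)
  refine ⟨B, ⟨⟨F, hF, (Finset.coe_subset.2 hB).trans hB₀F⟩, fun i hi => ?_, hmem.1⟩, ?_⟩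
  · have := hB₀N i (hB hi)
    omega
  · linarith [hmem.2]

lemma exists_thick_piece_sum_le (hf : ∀ i, 0 ≤ f i) {δ : ℝ} {K N₀ : ℕ}
    (hK : 0 < K) (hpieces : ∀ N, ∃ B, IsHeavyPiece 𝓕 f δ N B ∧ ∑ i ∈ B, f i ≤ 2 * δ)
    (hthick : ∀ B, IsHeavyPiece 𝓕 f δ N₀ B → ¬ IsThin K B) {ε : ℝ} (hε : 0 < ε) (q : ℕ) :
    ∃ Q : Finset ℕ, ∃ n, q < n ∧ ↑Q ⊆ Ico q n ∧ n ≤ Q.card ^ (2 * K) ∧ ∑ i ∈ Q, f i ≤ ε := by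
  obtain ⟨R, hR2, hRε⟩ : ∃ R : ℕ, 2 ≤ R ∧ 4 * δ ≤ ε * R := by
    obtain ⟨R, hR⟩ := exists_nat_ge (4 * δ / ε)
    refine ⟨R + 2, by omega, ?_⟩
    rw [div_le_iff₀ hε] at hR
    push_cast
    nlinarith
  -- starting beyond `(2 * R * R) ^ K` forces a segment witnessing non-thinness to have
  -- at least `2 * R * R` points
  obtain ⟨B, hB, hBsum⟩ := hpieces (q + N₀ + (2 * R * R) ^ K)
  obtain ⟨n, hn⟩ := exists_lt_card_filter_pow_of_not_isThin
    (hthick B ⟨hB.1, fun i hi => (hB.2.1 i hi).trans' (by omega), hB.2.2⟩)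
  set B' := B.filter (· < n)
  obtain ⟨x, hx⟩ : B'.Nonempty := by
    rw [← Finset.card_pos]
    by_contra! h0
    simp [Nat.le_zero.1 h0, zero_pow hK.ne'] at hn
  have hxN := hB.2.1 x (Finset.mem_filter.1 hx).1
  have hxn := (Finset.mem_filter.1 hx).2
  have hbig : 2 * R * R ≤ B'.card :=
    ((Nat.pow_lt_pow_iff_left hK.ne').1 (by omega : (2 * R * R) ^ K < B'.card ^ K)).le
  obtain ⟨Q, hQ, hcard, hsum⟩ :=
    Finset.exists_subset_sq_card_ge_sum_mul_le (fun i _ => hf i) hR2 hbig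
  refine ⟨Q, n, by omega, fun i hi => ?_, ?_, ?_⟩
  · obtain ⟨hiB, hin⟩ := Finset.mem_filter.1 (hQ hi)
    exact ⟨by have := hB.2.1 i hiB; omega, hin⟩
  · calc n ≤ B'.card ^ K := hn.le
      _ ≤ (Q.card ^ 2) ^ K := Nat.pow_le_pow_left hcard K
      _ = Q.card ^ (2 * K) := by rw [← pow_mul]
  · have hB'sum : ∑ i ∈ B', f i ≤ ∑ i ∈ B, f i :=
      Finset.sum_le_sum_of_subset_of_nonneg (Finset.filter_subset _ _) fun i _ _ => hf i
    have hR : (0 : ℝ) < R := by exact_mod_cast (by omega : 0 < R)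
    exact le_of_mul_le_mul_right (by nlinarith) hR

end HeavyPieces

/-- There is no family `𝓕` of finite subsets of `ℕ` and no `f : ℕ → (0,∞)` such that
`I_ε = I_{f,𝓕} = Exh (sup_{F ∈ 𝓕} μ_{f,F})`. -/
theorem stmt13 :
    ¬ ∃ (𝓕 : Set (Set ℕ)) (f : ℕ → ℝ), (∀ F ∈ 𝓕, F.Finite) ∧ (∀ i, 0 < f i) ∧
      expDensityZero = Exh (fun A => ⨆ F ∈ 𝓕, muFF f F A) := by
  rintro ⟨𝓕, f, -, hf, hEq⟩
  have hf0 : ∀ i, 0 ≤ f i := fun i => (hf i).le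
  obtain ⟨δ, hδ, hsupply⟩ := exists_isHeavyPiece hf0 (hEq ▸ univ_notMem_expDensityZero)
  by_cases hthin : ∀ k N, ∃ B, IsHeavyPiece 𝓕 f δ N B ∧ IsThin (k + 1) B
  · exact not_forall_exists_isHeavyPiece_isThin hf0 hEq hδ hthin
  push Not at hthin
  obtain ⟨k, N₀, hthick⟩ := hthin
  have hpieces := exists_isHeavyPiece_sum_le hδ hsupply (finite_setOf_exists_mem_and_le hf0 hEq hδ)
  obtain ⟨A, hA, hmass⟩ := exists_notMem_expDensityZero_tsum_ne_top hf0 (by omega : 0 < 2 * (k + 1))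
    fun ε hε q => exists_thick_piece_sum_le hf0 k.succ_pos hpieces hthick hε q
  exact hA (hEq ▸ mem_Exh_of_tsum_ne_top hmass)
end

section
/- There exists a pathological lower semicontinuous submeasure φ on ω such that P(φ) = ∞, Exh(φ) = Fin(φ) = Fin (the ideal of finite subsets of ω), and P(φ↾𝒫(A)) < ∞ for every A ∈ Fin(φ) (i.e., the degree of pathology of the restriction of φ to subsets of any set of finite φ-value is finite). -/
open Filter
open scoped ENNReal

/-!
Give the points of the `t`-th block of `ℕ` the `(t + 1)`-subsets of `range (2t + 2)` as codes, and
let `φ` be the sum over the blocks of the hitting number: the least size of a set meeting the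
codes of all points.  A set of size `t + 1` misses some `(t + 1)`-subset, so a whole block has
value `t + 2`.  But the points whose code contains a fixed `j` have hitting number `1`, and every
code has `t + 1` elements, so by double counting a measure below `φ` gives the block mass at most
`2`; hence `P(φ) = ∞`.  Every nonempty set has value at least `1`, so `φ` is infinite exactly on
infinite sets, and below a finite set the Dirac measures give `φ̂ ≥ 1` on nonempty sets, which
bounds the degree of pathology of the restriction by `max 1 (φ A)`.
-/

section Pathology

variable {X : Type*}

theorem div_le_pratio (a b : ℝ≥0∞) : a / b ≤ pratio a b := by
  unfold pratio
  split_ifs with h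
  · rcases h with ⟨rfl, rfl⟩ | ⟨rfl, rfl⟩ <;> simp
  · exact le_rfl

theorem pratio_self_le_one (a : ℝ≥0∞) : pratio a a ≤ 1 := by
  unfold pratio
  split_ifs
  · exact le_rfl
  · exact ENNReal.div_self_le_one

theorem pratio_le_of_one_le {a b : ℝ≥0∞} (hb : 1 ≤ b) : pratio a b ≤ a := by
  unfold pratio
  split_ifs with h
  · rcases h with ⟨-, rfl⟩ | ⟨rfl, -⟩
    · exact absurd hb (by simp)
    · exact le_top
  · exact (ENNReal.div_le_div_left hb a).trans_eq (div_one a)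

theorem isFAMeasure_indicator (x : X) : IsFAMeasure fun A : Set X => A.indicator 1 x :=
  ⟨by simp, fun A B hAB => by
    simp only [Set.indicator_union_of_disjoint hAB]⟩

theorem hat_empty (φ : Set X → ℝ≥0∞) : hat φ ∅ = 0 :=
  le_antisymm (iSup₂_le fun _ hμ => hμ.1.1.le) bot_le

theorem one_le_hat {φ : Set X → ℝ≥0∞} (hφ : ∀ A : Set X, A.Nonempty → 1 ≤ φ A) {A : Set X}
    (hA : A.Nonempty) : 1 ≤ hat φ A := by
  obtain ⟨x, hx⟩ := hA
  refine le_iSup₂_of_le (fun B : Set X => B.indicator 1 x) ⟨isFAMeasure_indicator x, fun B => ?_⟩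
    (by simp [hx])
  by_cases hB : x ∈ B
  · simpa [hB] using hφ B ⟨x, hB⟩
  · simp [hB]

theorem div_hat_le_degP (φ : Set X → ℝ≥0∞) (A : Set X) : φ A / hat φ A ≤ degP φ :=
  (div_le_pratio _ _).trans (le_iSup (fun A => pratio (φ A) (hat φ A)) A)

theorem hat_ne_of_degP_eq_top {φ : Set X → ℝ≥0∞} (h : degP φ = ⊤) : (fun A => hat φ A) ≠ φ := by
  intro hhat
  have hle : degP φ ≤ 1 := iSup_le fun A => by
    have hA : hat φ A = φ A := congrFun hhat A
    rw [hA]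
    exact pratio_self_le_one _
  simp [h] at hle

theorem degP_le_max_one_apply_univ {φ : Set X → ℝ≥0∞} (h0 : φ ∅ = 0) (hmono : Monotone φ)
    (hone : ∀ A : Set X, A.Nonempty → 1 ≤ φ A) : degP φ ≤ max 1 (φ Set.univ) := by
  refine iSup_le fun A => ?_
  rcases A.eq_empty_or_nonempty with rfl | hA
  · rw [h0, hat_empty, pratio, if_pos (Or.inl ⟨rfl, rfl⟩)]
    exact le_max_left _ _
  · exact (pratio_le_of_one_le (one_le_hat hone hA)).trans
      (le_max_of_le_right (hmono (Set.subset_univ A)))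

end Pathology

namespace IsSubmeasure

variable {X : Type*} {φ : Set X → ℝ≥0∞}

theorem monotone (hφ : IsSubmeasure φ) : Monotone φ := fun A B => hφ.2.1 A B

theorem inter_right (hφ : IsSubmeasure φ) (B : Set X) : IsSubmeasure fun A => φ (A ∩ B) :=
  ⟨by simpa using hφ.1, fun _ _ h => hφ.2.1 _ _ (Set.inter_subset_inter_left B h),
    fun A A' => by simpa only [Set.union_inter_distrib_right] using hφ.2.2 (A ∩ B) (A' ∩ B)⟩

theorem tsum {ι : Type*} {φ : ι → Set X → ℝ≥0∞} (hφ : ∀ i, IsSubmeasure (φ i)) :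
    IsSubmeasure fun A => ∑' i, φ i A :=
  ⟨by simp [(hφ _).1], fun A B h => ENNReal.tsum_le_tsum fun i => (hφ i).2.1 A B h,
    fun A B => (ENNReal.tsum_le_tsum fun i => (hφ i).2.2 A B).trans_eq ENNReal.tsum_add⟩

theorem lt_top_of_finite (hφ : IsSubmeasure φ) (hx : ∀ x, φ {x} < ⊤) {A : Set X}
    (hA : A.Finite) : φ A < ⊤ := by
  induction A, hA using Set.Finite.induction_on with
  | empty => simp [hφ.1]
  | insert _ _ ih =>
    rw [Set.insert_eq]
    exact (hφ.2.2 _ _).trans_lt (ENNReal.add_lt_top.2 ⟨hx _, ih⟩)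

end IsSubmeasure

theorem exh_eq_setOf_finite {φ : Set ℕ → ℝ≥0∞} (h0 : φ ∅ = 0)
    (htop : ∀ A : Set ℕ, A.Infinite → φ A = ⊤) : Exh φ = {A : Set ℕ | A.Finite} := by
  ext A
  refine ⟨fun hA => ?_, fun hA => ?_⟩
  · by_contra hinf
    replace hinf : A.Infinite := hinf
    have hconst : (fun n => φ (A \ Set.Iio n)) = fun _ => ⊤ :=
      funext fun n => htop _ (hinf.sdiff (Set.finite_Iio n))
    have hlim : Tendsto (fun n => φ (A \ Set.Iio n)) atTop (nhds 0) := hA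
    rw [hconst] at hlim
    exact ENNReal.top_ne_zero (tendsto_nhds_unique tendsto_const_nhds hlim)
  · obtain ⟨m, hm⟩ := hA.bddAbove
    refine tendsto_const_nhds.congr' (eventually_atTop.2 ⟨m + 1, fun n hn => ?_⟩)
    have hempty : A \ Set.Iio n = ∅ :=
      Set.sdiff_eq_empty.2 fun x hx => Set.mem_Iio.2 ((hm hx).trans_lt (by omega))
    simp only [hempty, h0]

section Hitting

variable {X α : Type*}

noncomputable def hittingNumber (c : X → Finset α) (A : Set X) : ℝ≥0∞ :=
  ⨅ J : {J : Finset α // ∀ x ∈ A, ∃ a ∈ J, a ∈ c x}, (J.1.card : ℝ≥0∞)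

variable {c : X → Finset α} {A : Set X}

theorem hittingNumber_le {J : Finset α} (hJ : ∀ x ∈ A, ∃ a ∈ J, a ∈ c x) :
    hittingNumber c A ≤ J.card :=
  iInf_le_of_le ⟨J, hJ⟩ le_rfl

theorem le_hittingNumber {m : ℝ≥0∞}
    (h : ∀ J : Finset α, (∀ x ∈ A, ∃ a ∈ J, a ∈ c x) → m ≤ J.card) : m ≤ hittingNumber c A :=
  le_iInf fun J => h J.1 J.2

theorem hittingNumber_empty (c : X → Finset α) : hittingNumber c ∅ = 0 :=
  nonpos_iff_eq_zero.1 (by simpa using hittingNumber_le (c := c) (J := ∅) (by simp))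

theorem isSubmeasure_hittingNumber (c : X → Finset α) : IsSubmeasure (hittingNumber c) := by
  classical
  refine ⟨hittingNumber_empty c, fun A B hAB => le_hittingNumber fun J hJ =>
    hittingNumber_le fun x hx => hJ x (hAB hx), fun A B => ?_⟩
  refine ENNReal.le_iInf_add_iInf fun J₁ J₂ => ?_
  calc hittingNumber c (A ∪ B) ≤ (J₁.1 ∪ J₂.1).card := by
        refine hittingNumber_le ?_
        rintro x (hx | hx)
        · obtain ⟨a, ha, hax⟩ := J₁.2 x hx
          exact ⟨a, Finset.mem_union_left _ ha, hax⟩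
        · obtain ⟨a, ha, hax⟩ := J₂.2 x hx
          exact ⟨a, Finset.mem_union_right _ ha, hax⟩
    _ ≤ J₁.1.card + J₂.1.card := by exact_mod_cast Finset.card_union_le _ _

theorem one_le_hittingNumber (hA : A.Nonempty) : 1 ≤ hittingNumber c A :=
  le_hittingNumber fun J hJ => by
    obtain ⟨a, ha, -⟩ := hJ _ hA.some_mem
    exact_mod_cast Finset.card_pos.2 ⟨a, ha⟩

theorem hittingNumber_le_one {a : α} (h : ∀ x ∈ A, a ∈ c x) : hittingNumber c A ≤ 1 := by
  simpa using hittingNumber_le (J := {a}) fun x hx => ⟨a, Finset.mem_singleton_self a, h x hx⟩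

/-- A set meeting every `k`-subset of `s` misses fewer than `k` points of `s`. -/
theorem card_add_one_sub_le_hittingNumber {s : Finset α} {k : ℕ}
    (hA : ∀ t ⊆ s, t.card = k → ∃ x ∈ A, c x = t) :
    ((s.card + 1 - k : ℕ) : ℝ≥0∞) ≤ hittingNumber c A := by
  classical
  refine le_hittingNumber fun J hJ => Nat.cast_le.2 ?_
  by_contra! hlt
  have hk : k ≤ (s \ J).card := by have := Finset.le_card_sdiff J s; omega
  obtain ⟨t, hts, htk⟩ := Finset.exists_subset_card_eq hk
  obtain ⟨x, hx, rfl⟩ := hA t (hts.trans Finset.sdiff_subset) htk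
  obtain ⟨a, haJ, hat⟩ := hJ x hx
  exact (Finset.mem_sdiff.1 (hts hat)).2 haJ

theorem IsFAMeasure.apply_finset {μ : Set X → ℝ≥0∞} (hμ : IsFAMeasure μ) (s : Finset X) :
    μ s = ∑ x ∈ s, μ {x} := by
  classical
  induction s using Finset.induction with
  | empty => simpa using hμ.1
  | insert a s ha ih =>
    rw [Finset.coe_insert, Set.insert_eq,
      hμ.2 _ _ (Set.disjoint_singleton_left.2 (by simpa using ha)), ih, Finset.sum_insert ha]

/-- Double counting: every `x ∈ A` lies in the `k` stars `{x | a ∈ c x}`, `a ∈ c x ⊆ s`, and each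
star has hitting number at most `1`. -/
theorem IsFAMeasure.mul_le_card_of_le_hittingNumber {μ : Set X → ℝ≥0∞} (hμ : IsFAMeasure μ)
    {A : Finset X} {s : Finset α} {k : ℕ} (hc : ∀ x ∈ A, c x ⊆ s ∧ (c x).card = k)
    (hle : ∀ B ⊆ (A : Set X), μ B ≤ hittingNumber c B) : k * μ A ≤ s.card := by
  classical
  calc k * μ A = ∑ x ∈ A, ∑ _a ∈ c x, μ {x} := by
        rw [hμ.apply_finset, Finset.mul_sum]
        refine Finset.sum_congr rfl fun x hx => ?_
        rw [Finset.sum_const, (hc x hx).2, nsmul_eq_mul]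
    _ = ∑ a ∈ s, ∑ x ∈ A.filter (a ∈ c ·), μ {x} :=
        Finset.sum_comm' fun x a => by
          simp only [Finset.mem_filter]
          exact ⟨fun h => ⟨h, (hc x h.1).1 h.2⟩, fun h => h.1⟩
    _ = ∑ a ∈ s, μ ↑(A.filter (a ∈ c ·)) := by simp only [hμ.apply_finset]
    _ ≤ ∑ _a ∈ s, 1 := Finset.sum_le_sum fun a _ =>
        (hle _ (Finset.coe_subset.2 (Finset.filter_subset _ _))).trans (hittingNumber_le_one (a := a) (by simp))
    _ = s.card := by simp

end Hitting

section BlockSum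

variable {X ι : Type*}

noncomputable def blockSum (ψ : Set X → ℝ≥0∞) (b : X → ι) (A : Set X) : ℝ≥0∞ :=
  ∑' i, ψ (A ∩ b ⁻¹' {i})

variable {ψ : Set X → ℝ≥0∞} {b : X → ι}

theorem IsSubmeasure.blockSum (hψ : IsSubmeasure ψ) : IsSubmeasure (blockSum ψ b) :=
  IsSubmeasure.tsum fun i => hψ.inter_right (b ⁻¹' {i})

theorem blockSum_eq_of_subset (hψ : ψ ∅ = 0) {A : Set X} {i : ι} (hA : A ⊆ b ⁻¹' {i}) :
    blockSum ψ b A = ψ A := by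
  rw [blockSum, tsum_eq_single i fun j hj => ?_, Set.inter_eq_left.2 hA]
  have hempty : A ∩ b ⁻¹' {j} = ∅ :=
    Set.eq_empty_of_forall_notMem fun x hx => hj (hx.2.symm.trans (hA hx.1))
  rw [hempty, hψ]

theorem one_le_blockSum (hone : ∀ A : Set X, A.Nonempty → 1 ≤ ψ A) {A : Set X}
    (hA : A.Nonempty) : 1 ≤ blockSum ψ b A := by
  obtain ⟨x, hx⟩ := hA
  exact (hone (A ∩ b ⁻¹' {b x}) ⟨x, hx, rfl⟩).trans (ENNReal.le_tsum (b x))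

theorem isLSC_blockSum (hψ : Monotone ψ) (hfin : ∀ i, (b ⁻¹' {i}).Finite) :
    IsLSC (blockSum ψ b) := by
  intro A
  refine le_antisymm ?_ (iSup₂_le fun F hF => ENNReal.tsum_le_tsum fun i =>
    hψ (Set.inter_subset_inter_left _ hF.1))
  rw [blockSum, ENNReal.tsum_eq_iSup_sum]
  refine iSup_le fun T => ?_
  set F := A ∩ ⋃ i ∈ T, b ⁻¹' {i}
  have hF : F ⊆ A ∧ F.Finite :=
    ⟨Set.inter_subset_left, (T.finite_toSet.biUnion fun i _ => hfin i).subset Set.inter_subset_right⟩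
  have hpart : ∀ i ∈ T, F ∩ b ⁻¹' {i} = A ∩ b ⁻¹' {i} := fun i hi =>
    Set.ext fun x => ⟨fun h => ⟨h.1.1, h.2⟩, fun h => ⟨⟨h.1, Set.mem_biUnion hi h.2⟩, h.2⟩⟩
  calc ∑ i ∈ T, ψ (A ∩ b ⁻¹' {i}) = ∑ i ∈ T, ψ (F ∩ b ⁻¹' {i}) :=
        Finset.sum_congr rfl fun i hi => by rw [hpart i hi]
    _ ≤ blockSum ψ b F := ENNReal.sum_le_tsum T
    _ ≤ ⨆ (F : Set X) (_ : F ⊆ A ∧ F.Finite), blockSum ψ b F := le_iSup₂_of_le F hF le_rfl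

theorem blockSum_eq_top_of_infinite (hone : ∀ A : Set X, A.Nonempty → 1 ≤ ψ A)
    (hfin : ∀ i, (b ⁻¹' {i}).Finite) {A : Set X} (hA : A.Infinite) : blockSum ψ b A = ⊤ := by
  have hS : (b '' A).Infinite := fun hS => hA <|
    (hS.biUnion fun i _ => hfin i).subset fun x hx => Set.mem_biUnion ⟨x, hx, rfl⟩ rfl
  have := hS.to_subtype
  refine top_unique ?_
  calc (⊤ : ℝ≥0∞) = ∑' _i : b '' A, 1 := (ENNReal.tsum_const_eq_top_of_ne_zero one_ne_zero).symm
    _ ≤ ∑' i : b '' A, ψ (A ∩ b ⁻¹' {(i : ι)}) := ENNReal.tsum_le_tsum fun ⟨_, x, hx, hi⟩ =>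
        hone _ ⟨x, hx, hi⟩
    _ ≤ blockSum ψ b A :=
        ENNReal.tsum_comp_le_tsum_of_injective Subtype.val_injective fun i => ψ (A ∩ b ⁻¹' {i})

end BlockSum

def halfSubsets (k : ℕ) : Finset (Finset ℕ) :=
  (Finset.range (2 * k)).powersetCard k

theorem halfSubsets_nonempty (k : ℕ) : (halfSubsets k).Nonempty :=
  Finset.powersetCard_nonempty.2 (by simp; omega)

/-- Any enumeration will do: only the partition of `ℕ` into the finite blocks matters. -/
noncomputable def blockEquiv : ℕ ≃ Σ t : ℕ, halfSubsets (t + 1) :=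
  have (t : ℕ) : Nonempty (halfSubsets (t + 1)) := (halfSubsets_nonempty _).to_subtype
  Classical.choice nonempty_equiv_of_countable

noncomputable def block (x : ℕ) : ℕ := (blockEquiv x).1

noncomputable def code (x : ℕ) : Finset ℕ := (blockEquiv x).2

noncomputable def hittingSubmeasure : Set ℕ → ℝ≥0∞ := blockSum (hittingNumber code) block

theorem finite_block_preimage (t : ℕ) : (block ⁻¹' {t}).Finite := by
  have : (Sigma.fst ⁻¹' {t} : Set (Σ t : ℕ, halfSubsets (t + 1))).Finite := by
    rw [← Set.range_sigmaMk]
    exact Set.finite_range _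
  exact this.preimage (f := blockEquiv) blockEquiv.injective.injOn

theorem code_mem_halfSubsets {x t : ℕ} (hx : block x = t) : code x ∈ halfSubsets (t + 1) :=
  hx ▸ (blockEquiv x).2.2

theorem exists_code_eq {s : Finset ℕ} {t : ℕ} (hs : s ∈ halfSubsets (t + 1)) :
    ∃ x ∈ block ⁻¹' {t}, code x = s :=
  ⟨blockEquiv.symm ⟨t, s, hs⟩, by simp [block], by rw [code, Equiv.apply_symm_apply]⟩

theorem isSubmeasure_hittingSubmeasure : IsSubmeasure hittingSubmeasure :=
  (isSubmeasure_hittingNumber code).blockSum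

theorem isLSC_hittingSubmeasure : IsLSC hittingSubmeasure :=
  isLSC_blockSum (isSubmeasure_hittingNumber code).monotone finite_block_preimage

theorem one_le_hittingSubmeasure {A : Set ℕ} (hA : A.Nonempty) : 1 ≤ hittingSubmeasure A :=
  one_le_blockSum (fun _ => one_le_hittingNumber) hA

theorem hittingSubmeasure_of_subset_block {A : Set ℕ} {t : ℕ} (hA : A ⊆ block ⁻¹' {t}) :
    hittingSubmeasure A = hittingNumber code A :=
  blockSum_eq_of_subset (hittingNumber_empty code) hA

theorem hittingSubmeasure_lt_top {A : Set ℕ} (hA : A.Finite) : hittingSubmeasure A < ⊤ := by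
  refine isSubmeasure_hittingSubmeasure.lt_top_of_finite (fun x => ?_) hA
  obtain ⟨a, ha⟩ := Finset.card_pos.1 <| by
    rw [(Finset.mem_powersetCard.1 (code_mem_halfSubsets (x := x) rfl)).2]
    exact Nat.succ_pos _
  rw [hittingSubmeasure_of_subset_block (Set.singleton_subset_iff.2 rfl)]
  exact (hittingNumber_le_one (a := a) fun y hy => hy ▸ ha).trans_lt ENNReal.one_lt_top

theorem hittingSubmeasure_eq_top {A : Set ℕ} (hA : A.Infinite) : hittingSubmeasure A = ⊤ :=
  blockSum_eq_top_of_infinite (fun _ => one_le_hittingNumber) finite_block_preimage hA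

theorem le_hittingSubmeasure_block (t : ℕ) :
    ((t + 2 : ℕ) : ℝ≥0∞) ≤ hittingSubmeasure (block ⁻¹' {t}) := by
  rw [hittingSubmeasure_of_subset_block subset_rfl]
  convert card_add_one_sub_le_hittingNumber (s := Finset.range (2 * (t + 1))) (k := t + 1)
    fun s hs hcard => exists_code_eq (Finset.mem_powersetCard.2 ⟨hs, hcard⟩) using 2
  simp only [Finset.card_range]
  omega

theorem hat_hittingSubmeasure_block_le_two (t : ℕ) :
    hat hittingSubmeasure (block ⁻¹' {t}) ≤ 2 := by
  refine iSup₂_le fun μ ⟨hμ, hle⟩ => ?_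
  obtain ⟨A, hA⟩ := (finite_block_preimage t).exists_finset_coe
  have hdouble := hμ.mul_le_card_of_le_hittingNumber (c := code) (A := A)
    (s := Finset.range (2 * (t + 1))) (k := t + 1)
    (fun x hx => Finset.mem_powersetCard.1 (code_mem_halfSubsets (hA ▸ hx : x ∈ block ⁻¹' {t})))
    (fun B hB => (hle B).trans_eq (hittingSubmeasure_of_subset_block (hA ▸ hB)))
  rw [hA, Finset.card_range] at hdouble
  refine (ENNReal.mul_le_mul_iff_right (by positivity) (ENNReal.natCast_ne_top _)).1
    (hdouble.trans_eq ?_)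
  push_cast
  ring

theorem degP_hittingSubmeasure : degP hittingSubmeasure = ⊤ := by
  refine top_unique (ENNReal.iSup_natCast ▸ iSup_le fun n => ?_)
  calc (n : ℝ≥0∞) ≤ ((2 * n + 2 : ℕ) : ℝ≥0∞) / 2 := by
        rw [ENNReal.le_div_iff_mul_le (by simp) (by simp)]
        exact_mod_cast (by omega : n * 2 ≤ 2 * n + 2)
    _ ≤ hittingSubmeasure (block ⁻¹' {2 * n}) / hat hittingSubmeasure (block ⁻¹' {2 * n}) :=
        ENNReal.div_le_div (le_hittingSubmeasure_block _) (hat_hittingSubmeasure_block_le_two _)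
    _ ≤ degP hittingSubmeasure := div_hat_le_degP _ _

/-- There is a pathological lsc submeasure `φ` on `ω` with `P φ = ∞`,
`Exh φ = Fin φ = Fin`, and `P (φ ↾ 𝒫(A)) < ∞` for every `A ∈ Fin φ`. -/
theorem stmt14 :
    ∃ φ : Set ℕ → ℝ≥0∞, IsSubmeasure φ ∧ IsLSC φ ∧ (fun A => hat φ A) ≠ φ ∧
      degP φ = ⊤ ∧
      Exh φ = {A : Set ℕ | A.Finite} ∧
      {A : Set ℕ | φ A < ⊤} = {A : Set ℕ | A.Finite} ∧
      ∀ A : Set ℕ, φ A < ⊤ → degP (fun S : Set ↥A => φ (Subtype.val '' S)) < ⊤ := by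
  refine ⟨hittingSubmeasure, isSubmeasure_hittingSubmeasure, isLSC_hittingSubmeasure,
    hat_ne_of_degP_eq_top degP_hittingSubmeasure, degP_hittingSubmeasure,
    exh_eq_setOf_finite isSubmeasure_hittingSubmeasure.1 fun _ => hittingSubmeasure_eq_top,
    Set.ext fun A => ⟨fun hA => ?_, hittingSubmeasure_lt_top⟩, fun A hA => ?_⟩
  · by_contra hinf
    exact hA.ne (hittingSubmeasure_eq_top hinf)
  · refine (degP_le_max_one_apply_univ (by simpa using isSubmeasure_hittingSubmeasure.1)
      (fun S T hST => isSubmeasure_hittingSubmeasure.monotone (Set.image_mono hST))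
      (fun S hS => one_le_hittingSubmeasure (hS.image _))).trans_lt ?_
    rw [Subtype.coe_image_univ]
    exact max_lt ENNReal.one_lt_top hA
end

section
/- Let φ be a nonpathological lower semicontinuous submeasure on ℕ with φ(ℕ) = ∞ and φ(F) < ∞ for every finite F (so that I = Fin(φ) is an F_σ ideal). Then for every X ∉ I there exists g : ℕ → [0,∞) with ∑_{n∈ℕ} g(n) = ∞ such that I ⊆ I_g and X ∉ I_g. Consequently, I is the intersection of a family of summable ideals; in particular every nonpathological F_σ ideal is contained in some summable ideal. -/
open Filter
open scoped ENNReal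

/-- The summable ideal generated by `g : ℕ → [0,∞)`. -/
def summableIdeal (g : ℕ → ℝ) : Set (Set ℕ) :=
  {A | Summable (A.indicator g)}

/-! Since `φ` is lower semicontinuous and nonpathological, `φ X = ∞` yields finite sets
`F k ⊆ X` and measures `μ k ≤ φ` with `μ k (F k) > 4 ^ k`. The density
`g n = ∑ k, 2⁻ᵏ μ k ({n} ∩ F k)` then has `∑_{n ∈ A} g n ≤ 2 φ A` for every `A`, while
`∑_{n ∈ X} g n ≥ 2 ^ k` for every `k`. -/

theorem ENNReal.summable_toReal_iff {α : Type*} {f : α → ℝ≥0∞} (hf : ∀ a, f a ≠ ⊤) :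
    Summable (fun a => (f a).toReal) ↔ ∑' a, f a ≠ ⊤ := by
  lift f to α → NNReal using hf
  simpa using ENNReal.tsum_coe_ne_top_iff_summable_coe.symm

section

variable {α : Type*}

namespace IsFAMeasure

variable {μ : Set α → ℝ≥0∞}

theorem apply_finset_s15 (hμ : IsFAMeasure μ) (s : Finset α) : μ s = ∑ a ∈ s, μ {a} := by
  classical
  induction s using Finset.induction_on with
  | empty => simpa using hμ.1
  | insert a s ha ih =>
    rw [Finset.coe_insert, Set.insert_eq, hμ.2 _ _ (by simpa using ha), ih,
      Finset.sum_insert ha]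

theorem tsum_indicator_singleton (hμ : IsFAMeasure μ) {S : Set α} (hS : S.Finite) :
    ∑' a, S.indicator (fun a => μ {a}) a = μ S := by
  rw [tsum_eq_sum (s := hS.toFinset) fun a ha => Set.indicator_of_notMem (by simpa using ha) _,
    Finset.sum_congr rfl fun a ha => Set.indicator_of_mem (by simpa using ha) _,
    ← hμ.apply_finset_s15, hS.coe_toFinset]

end IsFAMeasure

theorem exists_finite_measure_lt {φ : Set α → ℝ≥0∞} (hlsc : IsLSC φ)
    (hnp : ∀ A, hat φ A = φ A) {X : Set α} {c : ℝ≥0∞} (hc : c < φ X) :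
    ∃ (F : Set α) (μ : Set α → ℝ≥0∞), F ⊆ X ∧ F.Finite ∧ IsFAMeasure μ ∧
      (∀ B, μ B ≤ φ B) ∧ c < μ F := by
  rw [hlsc X] at hc
  obtain ⟨F, hF⟩ := lt_iSup_iff.1 hc
  obtain ⟨⟨hFX, hFfin⟩, hcF⟩ := lt_iSup_iff.1 hF
  rw [← hnp F, hat] at hcF
  obtain ⟨μ, hμ⟩ := lt_iSup_iff.1 hcF
  obtain ⟨⟨hμ, hμφ⟩, hcμ⟩ := lt_iSup_iff.1 hμ
  exact ⟨F, μ, hFX, hFfin, hμ, hμφ, hcμ⟩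

noncomputable def mixtureDensity (r : ℕ → ℝ≥0∞) (μ : ℕ → Set α → ℝ≥0∞) (F : ℕ → Set α)
    (a : α) : ℝ≥0∞ :=
  ∑' k, r k * (F k).indicator (fun b => μ k {b}) a

theorem tsum_indicator_mixtureDensity {r : ℕ → ℝ≥0∞} {μ : ℕ → Set α → ℝ≥0∞}
    {F : ℕ → Set α} (hμ : ∀ k, IsFAMeasure (μ k)) (hF : ∀ k, (F k).Finite) (A : Set α) :
    ∑' a, A.indicator (mixtureDensity r μ F) a = ∑' k, r k * μ k (A ∩ F k) := by
  have hpoint : ∀ a, A.indicator (mixtureDensity r μ F) a =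
      ∑' k, r k * A.indicator ((F k).indicator fun b => μ k {b}) a := by
    intro a
    by_cases ha : a ∈ A <;> simp [mixtureDensity, ha]
  rw [tsum_congr hpoint, ENNReal.tsum_comm]
  refine tsum_congr fun k => ?_
  rw [ENNReal.tsum_mul_left, Set.indicator_indicator,
    (hμ k).tsum_indicator_singleton ((hF k).inter_of_right A)]

theorem exists_density_of_nonpathological {φ : Set α → ℝ≥0∞} (hmono : Monotone φ)
    (hlsc : IsLSC φ) (hnp : ∀ A, hat φ A = φ A) {X : Set α} (hX : φ X = ⊤) :
    ∃ G : α → ℝ≥0∞, (∀ A, ∑' a, A.indicator G a ≤ 2 * φ A) ∧ ∑' a, X.indicator G a = ⊤ := by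
  have approx : ∀ k : ℕ, ∃ (F : Set α) (μ : Set α → ℝ≥0∞), F ⊆ X ∧ F.Finite ∧
      IsFAMeasure μ ∧ (∀ B, μ B ≤ φ B) ∧ 4 ^ k < μ F := fun k =>
    exists_finite_measure_lt hlsc hnp (hX ▸ ENNReal.pow_lt_top ENNReal.ofNat_lt_top)
  choose F μ hFX hF hμ hμφ hμF using approx
  refine ⟨mixtureDensity (fun k => 2⁻¹ ^ k) μ F, fun A => ?_, ?_⟩
  · rw [tsum_indicator_mixtureDensity hμ hF]
    calc ∑' k, 2⁻¹ ^ k * μ k (A ∩ F k) ≤ ∑' k, 2⁻¹ ^ k * φ A :=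
          ENNReal.tsum_le_tsum fun k => by
            gcongr
            exact (hμφ k _).trans (hmono Set.inter_subset_left)
      _ = 2 * φ A := by
        rw [ENNReal.tsum_mul_right, ENNReal.tsum_geometric, ENNReal.one_sub_inv_two, inv_inv]
  · rw [tsum_indicator_mixtureDensity hμ hF]
    refine ENNReal.eq_top_of_forall_nnreal_le fun r => ?_
    obtain ⟨k, hk⟩ := pow_unbounded_of_one_lt r one_lt_two
    calc (r : ℝ≥0∞) ≤ 2 ^ k := by exact_mod_cast hk.le
      _ = 2⁻¹ ^ k * 4 ^ k := by
        rw [← mul_pow, show (4 : ℝ≥0∞) = 2 * 2 by norm_num, ← mul_assoc,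
          ENNReal.inv_mul_cancel two_ne_zero ENNReal.ofNat_ne_top, one_mul]
      _ ≤ 2⁻¹ ^ k * μ k (X ∩ F k) := by
        rw [Set.inter_eq_right.2 (hFX k)]
        gcongr
        exact (hμF k).le
      _ ≤ ∑' k, 2⁻¹ ^ k * μ k (X ∩ F k) := ENNReal.le_tsum k

end

theorem mem_summableIdeal_toReal_iff {G : ℕ → ℝ≥0∞} (hG : ∀ n, G n ≠ ⊤) (A : Set ℕ) :
    A ∈ summableIdeal (fun n => (G n).toReal) ↔ ∑' n, A.indicator G n ≠ ⊤ := by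
  have hcomp : A.indicator (fun n => (G n).toReal) = fun n => (A.indicator G n).toReal :=
    (Set.indicator_comp_of_zero ENNReal.toReal_zero :
      A.indicator (ENNReal.toReal ∘ G) = ENNReal.toReal ∘ A.indicator G)
  rw [summableIdeal, Set.mem_ofPred_eq, hcomp, ENNReal.summable_toReal_iff]
  exact fun n => ne_top_of_le_ne_top (hG n) (Set.indicator_le_self A G n)

theorem exists_summableIdeal_separating {φ : Set ℕ → ℝ≥0∞} (hmono : Monotone φ)
    (hlsc : IsLSC φ) (hnp : ∀ A, hat φ A = φ A) (hfin : ∀ n, φ {n} < ⊤) {X : Set ℕ}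
    (hX : φ X = ⊤) :
    ∃ g : ℕ → ℝ, (∀ n, 0 ≤ g n) ∧ (∀ A, φ A < ⊤ → A ∈ summableIdeal g) ∧
      X ∉ summableIdeal g := by
  obtain ⟨G, hGφ, hGX⟩ := exists_density_of_nonpathological hmono hlsc hnp hX
  have bound : ∀ A, φ A < ⊤ → ∑' n, A.indicator G n ≠ ⊤ := fun A hA =>
    ne_top_of_le_ne_top (ENNReal.mul_ne_top ENNReal.ofNat_ne_top hA.ne) (hGφ A)
  have hG : ∀ n, G n ≠ ⊤ := fun n => by
    refine ne_top_of_le_ne_top (bound {n} (hfin n)) ?_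
    have h := ENNReal.le_tsum (f := ({n} : Set ℕ).indicator G) n
    rwa [Set.indicator_of_mem (Set.mem_singleton n)] at h
  refine ⟨fun n => (G n).toReal, fun n => ENNReal.toReal_nonneg, fun A hA => ?_, ?_⟩
  · exact (mem_summableIdeal_toReal_iff hG A).2 (bound A hA)
  · rw [mem_summableIdeal_toReal_iff hG, hGX]
    exact fun h => h rfl

/-- If `φ` is a nonpathological lsc submeasure on `ℕ` with `φ ℕ = ∞` and finite on finite
sets (so `I = Fin φ` is an `F_σ` ideal), then for every `X ∉ I` there is `g` with
`∑ g = ∞`, `I ⊆ I_g` and `X ∉ I_g`; consequently `I` is an intersection of summable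
ideals, and in particular is contained in some summable ideal. -/
theorem stmt15 (φ : Set ℕ → ℝ≥0∞) (hφ : IsSubmeasure φ) (hlsc : IsLSC φ)
    (hnp : ∀ A, hat φ A = φ A) (hinf : φ Set.univ = ⊤)
    (hfin : ∀ F : Set ℕ, F.Finite → φ F < ⊤) :
    (∀ X : Set ℕ, φ X = ⊤ → ∃ g : ℕ → ℝ, (∀ n, 0 ≤ g n) ∧ ¬ Summable g ∧
      (∀ A : Set ℕ, φ A < ⊤ → A ∈ summableIdeal g) ∧ X ∉ summableIdeal g) ∧
    (∃ G : Set (ℕ → ℝ), (∀ g ∈ G, (∀ n, 0 ≤ g n) ∧ ¬ Summable g) ∧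
      {A : Set ℕ | φ A < ⊤} = ⋂ g ∈ G, summableIdeal g) ∧
    (∃ g : ℕ → ℝ, (∀ n, 0 ≤ g n) ∧ ¬ Summable g ∧
      {A : Set ℕ | φ A < ⊤} ⊆ summableIdeal g) := by
  have separate : ∀ X : Set ℕ, φ X = ⊤ → ∃ g : ℕ → ℝ, (∀ n, 0 ≤ g n) ∧ ¬ Summable g ∧
      (∀ A : Set ℕ, φ A < ⊤ → A ∈ summableIdeal g) ∧ X ∉ summableIdeal g := by
    intro X hX
    obtain ⟨g, hg0, hIg, hXg⟩ := exists_summableIdeal_separating (fun A B => hφ.2.1 A B)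
      hlsc hnp (fun n => hfin _ (Set.finite_singleton n)) hX
    exact ⟨g, hg0, fun hg => hXg (hg.indicator X), hIg, hXg⟩
  refine ⟨separate, ⟨{g | (∀ n, 0 ≤ g n) ∧ ¬ Summable g ∧
    ∀ A : Set ℕ, φ A < ⊤ → A ∈ summableIdeal g}, fun g hg => ⟨hg.1, hg.2.1⟩, ?_⟩, ?_⟩
  · ext A
    simp only [Set.mem_ofPred_eq, Set.mem_iInter]
    refine ⟨fun hA g hg => hg.2.2 A hA, fun hA => lt_top_iff_ne_top.2 fun hAtop => ?_⟩
    obtain ⟨g, hg0, hg, hIg, hAg⟩ := separate A hAtop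
    exact hAg (hA g ⟨hg0, hg, hIg⟩)
  · obtain ⟨g, hg0, hg, hIg, -⟩ := separate Set.univ hinf
    exact ⟨g, hg0, hg, hIg⟩
end
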